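/- Suppose c > c_⋆, where c_⋆ = -1 - x_⋆ - e^{x_⋆} and x_⋆ is the unique positive solution of x e^x/(1+e^x) = 1. Then there exist ρ_c < 1 and a positive integer n_c such that for every integer n ≥ n_c, every x ∈ Ω_n, and every integer t ≥ 0, ‖K_{c,n}^t(x, ·) − π_{c,n}(·)‖_TV ≤ 5 n ρ_c^t. -/

import Mathlib

open Real MeasureTheory

noncomputable def _root_.sigmoid (x : ℝ) : ℝ := Real.exp x / (1 + Real.exp x)

noncomputable def mc (c x : ℝ) : ℝ := _root_.sigmoid (c * x)

noncomputable def Ker (c : ℝ) (n : ℕ) (i j : Fin (n + 1)) : ℝ :=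
  (n.choose (j : ℕ)) * _root_.sigmoid (c * (i : ℕ) / n) ^ (j : ℕ) *
    (1 - _root_.sigmoid (c * (i : ℕ) / n)) ^ (n - (j : ℕ))

noncomputable def KerPow (c : ℝ) (n : ℕ) : ℕ → Fin (n + 1) → Fin (n + 1) → ℝ
  | 0 => fun i j => if i = j then 1 else 0
  | t + 1 => fun i j => ∑ k, KerPow c n t i k * Ker c n k j

noncomputable def piWeight (c : ℝ) (n : ℕ) (j : Fin (n + 1)) : ℝ :=
  (n.choose (j : ℕ)) * (1 + Real.exp (c * (j : ℕ) / n)) ^ n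

noncomputable def piDist (c : ℝ) (n : ℕ) (j : Fin (n + 1)) : ℝ :=
  piWeight c n j / ∑ k, piWeight c n k

noncomputable def tvDist {m : ℕ} (p q : Fin m → ℝ) : ℝ :=
  ⨆ A : Finset (Fin m), |∑ i ∈ A, p i - ∑ i ∈ A, q i|

open Finset

noncomputable def sigd (x : ℝ) : ℝ := _root_.sigmoid x * (1 - _root_.sigmoid x)


lemma one_add_exp_pos (x : ℝ) : 0 < 1 + Real.exp x := by positivity

lemma sigmoid_pos (x : ℝ) : 0 < _root_.sigmoid x := by
  unfold _root_.sigmoid; positivity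

lemma sigmoid_lt_one (x : ℝ) : _root_.sigmoid x < 1 := by
  unfold _root_.sigmoid
  rw [div_lt_one (one_add_exp_pos x)]
  linarith

lemma one_sub_sigmoid (x : ℝ) : 1 - _root_.sigmoid x = 1 / (1 + Real.exp x) := by
  unfold _root_.sigmoid
  field_simp
  ring

lemma sigd_pos (x : ℝ) : 0 < sigd x := by
  have := _root_.sigmoid_pos x; have := _root_.sigmoid_lt_one x
  unfold sigd; nlinarith

lemma sigd_le_quarter (x : ℝ) : sigd x ≤ 1/4 := by
  unfold sigd; nlinarith [sq_nonneg (_root_.sigmoid x - 1/2)]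

lemma sigmoid_neg (x : ℝ) : _root_.sigmoid (-x) = 1 - _root_.sigmoid x := by
  rw [one_sub_sigmoid]
  unfold _root_.sigmoid
  rw [Real.exp_neg]
  rw [div_eq_div_iff (by positivity) (ne_of_gt (one_add_exp_pos x))]
  field_simp
  ring

lemma hasDerivAt_sigmoid (x : ℝ) : HasDerivAt _root_.sigmoid (sigd x) x := by
  have h1 : HasDerivAt (fun x : ℝ => 1 + Real.exp x) (Real.exp x) x :=
    (Real.hasDerivAt_exp x).const_add 1
  have h2 : HasDerivAt (fun x : ℝ => Real.exp x / (1 + Real.exp x))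
      ((Real.exp x * (1 + Real.exp x) - Real.exp x * Real.exp x) / (1 + Real.exp x)^2) x :=
    (Real.hasDerivAt_exp x).div h1 (ne_of_gt (one_add_exp_pos x))
  convert h2 using 1
  · rfl
  unfold sigd _root_.sigmoid
  field_simp

lemma sigmoid_monotone : Monotone _root_.sigmoid := by
  intro a b hab
  rcases eq_or_lt_of_le hab with h | h
  · rw [h]
  · have : StrictMonoOn _root_.sigmoid (Set.Icc a b) := by
      apply strictMonoOn_of_hasDerivWithinAt_pos (convex_Icc a b)
        (fun x _ => (_root_.hasDerivAt_sigmoid x).continuousAt.continuousWithinAt)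
        (fun x _ => ((_root_.hasDerivAt_sigmoid x).hasDerivWithinAt))
        (fun x _ => sigd_pos x)
    exact le_of_lt (this (Set.left_mem_Icc.2 hab) (Set.right_mem_Icc.2 hab) h)

-- Lipschitz bound |_root_.sigmoid a - _root_.sigmoid b| ≤ (1/4)|a-b|
lemma sigmoid_lipschitz (a b : ℝ) : |_root_.sigmoid a - _root_.sigmoid b| ≤ (1/4) * |a - b| := by
  have := Convex.norm_image_sub_le_of_norm_hasDerivWithin_le
    (f := _root_.sigmoid) (f' := fun x => sigd x) (C := 1/4)
    (fun x _ => (_root_.hasDerivAt_sigmoid x).hasDerivWithinAt) (fun x _ => by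
      rw [Real.norm_eq_abs, abs_of_pos (sigd_pos x)]; exact sigd_le_quarter x)
    (convex_univ) (Set.mem_univ b) (Set.mem_univ a)
  simpa [Real.norm_eq_abs] using this


lemma sigmoid_zero : _root_.sigmoid 0 = 1/2 := by
  unfold _root_.sigmoid; rw [Real.exp_zero]; norm_num

lemma sigd_neg (x : ℝ) : sigd (-x) = sigd x := by
  unfold sigd; rw [_root_.sigmoid_neg]; ring

lemma hasDerivAt_sigd (x : ℝ) : HasDerivAt sigd (sigd x * (1 - 2 * _root_.sigmoid x)) x := by
  have h := (_root_.hasDerivAt_sigmoid x).mul ((_root_.hasDerivAt_sigmoid x).const_sub 1)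
  exact h.congr_deriv (by unfold sigd; ring)

lemma sigd_abs_deriv_le (x : ℝ) : |sigd x * (1 - 2 * _root_.sigmoid x)| ≤ 1/4 := by
  rw [abs_mul]
  have h1 : |sigd x| ≤ 1/4 := by
    rw [abs_of_pos (sigd_pos x)]; exact sigd_le_quarter x
  have h2 : |1 - 2 * _root_.sigmoid x| ≤ 1 := by
    rw [abs_le]; constructor <;> nlinarith [_root_.sigmoid_pos x, _root_.sigmoid_lt_one x]
  calc |sigd x| * |1 - 2 * _root_.sigmoid x| ≤ (1/4) * 1 := by
        apply mul_le_mul h1 h2 (abs_nonneg _) (by norm_num)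
    _ = 1/4 := by norm_num

lemma sigd_lipschitz (a b : ℝ) : |sigd a - sigd b| ≤ (1/4) * |a - b| := by
  have := Convex.norm_image_sub_le_of_norm_hasDerivWithin_le
    (f := sigd) (f' := fun x => sigd x * (1 - 2 * _root_.sigmoid x)) (C := 1/4)
    (fun x _ => (hasDerivAt_sigd x).hasDerivWithinAt) (fun x _ => by
      rw [Real.norm_eq_abs]; exact sigd_abs_deriv_le x)
    (convex_univ) (Set.mem_univ b) (Set.mem_univ a)
  simpa [Real.norm_eq_abs] using this

lemma sigd_antitone_nonneg {a b : ℝ} (ha : 0 ≤ a) (hab : a ≤ b) : sigd b ≤ sigd a := by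
  have half : ∀ y ∈ Set.Icc a b, _root_.sigmoid y ≥ 1/2 := by
    intro y hy
    have : _root_.sigmoid 0 ≤ _root_.sigmoid y := _root_.sigmoid_monotone (le_trans ha hy.1)
    rwa [_root_.sigmoid_zero] at this
  have hanti : AntitoneOn sigd (Set.Icc a b) := by
    apply antitoneOn_of_deriv_nonpos (convex_Icc a b)
      (fun x hx => (hasDerivAt_sigd x).continuousAt.continuousWithinAt)
      (fun x hx => (hasDerivAt_sigd x).differentiableAt.differentiableWithinAt)
    intro x hx
    rw [(hasDerivAt_sigd x).deriv]
    have hmem : x ∈ Set.Icc a b := interior_subset hx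
    nlinarith [sigd_pos x, half x hmem]
  exact hanti (Set.left_mem_Icc.2 hab) (Set.right_mem_Icc.2 hab) hab


lemma sigd_eq (v : ℝ) : sigd v = Real.exp v / (1 + Real.exp v)^2 := by
  unfold sigd _root_.sigmoid
  field_simp
  ring

lemma phi_nonneg (xs : ℝ) (hxs0 : 0 < xs) (hxse : xs * Real.exp xs = 1 + Real.exp xs)
    (v : ℝ) : 0 ≤ v^2 - (1 + xs + Real.exp xs)*v + Real.exp v + Real.exp (-v) + 2 := by
  set B := 1 + xs + Real.exp xs with hB
  have hexs : Real.exp (-xs) = xs - 1 := by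
    have h1 : (xs - 1) * Real.exp xs = 1 := by nlinarith [hxse]
    rw [Real.exp_neg]
    field_simp
    nlinarith [h1]
  set φ : ℝ → ℝ := fun v => v^2 - B*v + Real.exp v + Real.exp (-v) + 2 with hφ
  have hd : ∀ v : ℝ, HasDerivAt φ (2*v - B + Real.exp v - Real.exp (-v)) v := by
    intro v
    have h1 : HasDerivAt (fun v : ℝ => v^2) (2*v) v := by
      simpa using hasDerivAt_pow 2 v
    have h2 : HasDerivAt (fun v : ℝ => B*v) B v := by
      simpa using (hasDerivAt_id v).const_mul B
    have h3 : HasDerivAt (fun v : ℝ => Real.exp (-v)) (-Real.exp (-v)) v := by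
      have := (Real.hasDerivAt_exp (-v)).comp v (hasDerivAt_neg v)
      simpa [Function.comp_def] using this
    have H : 2*v - B + Real.exp v - Real.exp (-v)
        = ((2*v - B) + Real.exp v) + (-Real.exp (-v)) := by ring
    rw [H]
    exact (((h1.sub h2).add (Real.hasDerivAt_exp v)).add h3).add_const 2
  have hphixs : φ xs = 0 := by
    simp only [hφ, hB, hexs]; nlinarith [hxse]
  have hderivxs : ∀ v : ℝ, xs ≤ v → 0 ≤ 2*v - B + Real.exp v - Real.exp (-v) := by
    intro v hv
    have e1 : Real.exp xs ≤ Real.exp v := Real.exp_le_exp.mpr hv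
    have e2 : Real.exp (-v) ≤ Real.exp (-xs) := Real.exp_le_exp.mpr (by linarith)
    have : 2*xs - B + Real.exp xs - Real.exp (-xs) = 0 := by
      rw [hexs, hB]; ring
    linarith
  have hderivxs' : ∀ v : ℝ, v ≤ xs → 2*v - B + Real.exp v - Real.exp (-v) ≤ 0 := by
    intro v hv
    have e1 : Real.exp v ≤ Real.exp xs := Real.exp_le_exp.mpr hv
    have e2 : Real.exp (-xs) ≤ Real.exp (-v) := Real.exp_le_exp.mpr (by linarith)
    have : 2*xs - B + Real.exp xs - Real.exp (-xs) = 0 := by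
      rw [hexs, hB]; ring
    linarith
  rcases le_total xs v with h | h
  · have mono : MonotoneOn φ (Set.Ici xs) := by
      apply monotoneOn_of_deriv_nonneg (convex_Ici xs)
        (fun w hw => (hd w).continuousAt.continuousWithinAt)
        (fun w hw => (hd w).differentiableAt.differentiableWithinAt)
      intro w hw
      rw [(hd w).deriv]
      exact hderivxs w (le_of_lt (by simpa using hw))
    have := mono (Set.mem_Ici.mpr (le_refl xs)) (Set.mem_Ici.mpr h) h
    -- φ xs ≤ φ v
    calc (0:ℝ) = φ xs := hphixs.symm
      _ ≤ φ v := this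
  · have anti : AntitoneOn φ (Set.Iic xs) := by
      apply antitoneOn_of_deriv_nonpos (convex_Iic xs)
        (fun w hw => (hd w).continuousAt.continuousWithinAt)
        (fun w hw => (hd w).differentiableAt.differentiableWithinAt)
      intro w hw
      rw [(hd w).deriv]
      exact hderivxs' w (le_of_lt (by simpa using hw))
    have := anti (Set.mem_Iic.mpr h) (Set.mem_Iic.mpr (le_refl xs)) h
    calc (0:ℝ) = φ xs := hphixs.symm
      _ ≤ φ v := this

lemma pos_case_bound (c z : ℝ) (hc : 0 ≤ c) (hz : 0 ≤ z) :
    |c * sigd (c * _root_.sigmoid (c*z))| * |c * sigd (c*z)| ≤ 4 * Real.exp (-2) := by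
  set u := c*z with hu
  set v := c * _root_.sigmoid u with hv
  have hu0 : 0 ≤ u := mul_nonneg hc hz
  have hv0 : 0 ≤ v := mul_nonneg hc (le_of_lt (_root_.sigmoid_pos u))
  have habs1 : |c * sigd (c * _root_.sigmoid (c*z))| = c * sigd v := by
    rw [abs_of_nonneg (mul_nonneg hc (le_of_lt (sigd_pos _)))]
  have habs2 : |c * sigd (c*z)| = c * sigd u := by
    rw [abs_of_nonneg (mul_nonneg hc (le_of_lt (sigd_pos _)))]
  rw [habs1, habs2]
  -- c^2 * sigd u = v^2 * exp (-u)
  have key1 : c * sigd u * c = v^2 * Real.exp (-u) := by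
    rw [sigd_eq, hv]
    unfold _root_.sigmoid
    rw [Real.exp_neg]
    field_simp
  have key2 : sigd v ≤ Real.exp (-v) := by
    rw [sigd_eq, Real.exp_neg, inv_eq_one_div,
      div_le_div_iff₀ (by positivity) (Real.exp_pos v)]
    nlinarith [Real.exp_pos v]
  have key3 : v^2 ≤ 4 * Real.exp (v - 2) := by
    have h := Real.add_one_le_exp (v/2 - 1)
    have : v/2 ≤ Real.exp (v/2 - 1) := by linarith
    have hsq : (v/2)^2 ≤ (Real.exp (v/2-1))^2 := by
      apply sq_le_sq' <;> nlinarith [Real.exp_pos (v/2-1)]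
    have : (Real.exp (v/2-1))^2 = Real.exp (v-2) := by
      rw [sq, ← Real.exp_add]; ring_nf
    nlinarith [hsq]
  have hexpu : Real.exp (-u) ≤ 1 := Real.exp_le_one_iff.mpr (by linarith)
  calc c * sigd v * (c * sigd u)
      = (c * sigd u * c) * sigd v := by ring
    _ = v^2 * Real.exp (-u) * sigd v := by rw [key1]
    _ ≤ v^2 * 1 * Real.exp (-v) := by
        apply mul_le_mul _ key2 (le_of_lt (sigd_pos v)) (by positivity)
        nlinarith [sq_nonneg v, Real.exp_pos (-u)]
    _ = v^2 * Real.exp (-v) := by ring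
    _ ≤ 4 * Real.exp (v-2) * Real.exp (-v) := by
        apply mul_le_mul_of_nonneg_right key3 (le_of_lt (Real.exp_pos _))
    _ = 4 * Real.exp (-2) := by rw [mul_assoc, ← Real.exp_add]; ring_nf

lemma neg_case_bound (xs c : ℝ) (hxs0 : 0 < xs) (hxse : xs * Real.exp xs = 1 + Real.exp xs)
    (hc : -(1 + xs + Real.exp xs) < c) (hcneg : c < 0) (z : ℝ) (hz0 : 0 ≤ z) (hz1 : z ≤ 1) :
    |c * sigd (c * _root_.sigmoid (c*z))| * |c * sigd (c*z)| ≤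
      1 - ((1 + xs + Real.exp xs) + c) * ((-c) * _root_.sigmoid c * sigd (-c/2)) := by
  obtain ⟨B, hB⟩ : ∃ x:ℝ, x = 1 + xs + Real.exp xs := ⟨_, rfl⟩
  obtain ⟨b, hb⟩ : ∃ x:ℝ, x = -c := ⟨_, rfl⟩
  rw [← hB] at hc ⊢
  have hbpos : 0 < b := by rw [hb]; linarith
  have hbB : b < B := by rw [hb]; linarith
  obtain ⟨s, hs⟩ : ∃ x:ℝ, x = _root_.sigmoid (c*z) := ⟨_, rfl⟩
  have hs0 : 0 < s := by rw [hs]; exact _root_.sigmoid_pos _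
  have hshalf : s ≤ 1/2 := by
    have : _root_.sigmoid (c*z) ≤ _root_.sigmoid 0 := _root_.sigmoid_monotone (by nlinarith)
    rw [hs]; rwa [_root_.sigmoid_zero] at this
  obtain ⟨v, hv⟩ : ∃ x:ℝ, x = b * s := ⟨_, rfl⟩
  have hv0 : 0 < v := by rw [hv]; exact mul_pos hbpos hs0
  have hvhalf : v ≤ b/2 := by rw [hv]; nlinarith
  -- first factor : |c sigd (c*s)| = b * sigd v  (c*s = -v)
  have habs1 : |c * sigd (c * _root_.sigmoid (c*z))| = b * sigd v := by
    have : c * _root_.sigmoid (c*z) = -v := by rw [hv, hs, hb]; ring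
    rw [this, sigd_neg]
    rw [abs_of_nonpos (by nlinarith [sigd_pos v])]
    rw [hb]; ring
  have habs2 : |c * sigd (c*z)| = b * sigd (c*z) := by
    rw [abs_of_nonpos (by nlinarith [sigd_pos (c*z)])]
    rw [hb]; ring
  rw [habs1, habs2]
  -- sigd (c*z) = s * (1-s)
  have hsd : sigd (c*z) = s * (1-s) := by rw [hs]; rfl
  -- product = v*(b-v)*sigd v
  have hprod : b * sigd v * (b * sigd (c*z)) = v * (b-v) * sigd v := by
    rw [hsd, hv]; ring
  rw [hprod]
  -- key: v*(B-v)*sigd v ≤ 1  from phi_nonneg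
  have hinv : Real.exp (-v) * Real.exp v = 1 := by rw [← Real.exp_add]; simp
  have key : v * (B-v) * sigd v ≤ 1 := by
    have hphi := phi_nonneg xs hxs0 hxse v
    rw [sigd_eq, ← mul_div_assoc, div_le_one (by positivity)]
    nlinarith [mul_nonneg hphi (le_of_lt (Real.exp_pos v)), hinv, Real.exp_pos v]
  have hmono1 : _root_.sigmoid c ≤ s := by
    rw [hs]; exact _root_.sigmoid_monotone (by nlinarith)
  have hv_lb : b * _root_.sigmoid c ≤ v := by
    rw [hv]; exact mul_le_mul_of_nonneg_left hmono1 (le_of_lt hbpos)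
  have hsigd_lb : sigd (b/2) ≤ sigd v := sigd_antitone_nonneg (le_of_lt hv0) hvhalf
  have harg : sigd (-c/2) = sigd (b/2) := by
    have : (-c/2 : ℝ) = b/2 := by rw [hb]
    rw [this]
  have hfin : v * (b-v) * sigd v ≤ 1 - (B-b) * ((b * _root_.sigmoid c) * sigd (b/2)) := by
    have h1 : (b * _root_.sigmoid c) * sigd (b/2) ≤ v * sigd v := by
      apply mul_le_mul hv_lb hsigd_lb (le_of_lt (sigd_pos _)) (le_of_lt hv0)
    have h2 : v * (b-v) * sigd v = v * (B-v) * sigd v - (B-b) * (v * sigd v) := by ring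
    have h3 : (B-b) * ((b * _root_.sigmoid c) * sigd (b/2)) ≤ (B-b) * (v * sigd v) := by
      apply mul_le_mul_of_nonneg_left h1 (by linarith)
    linarith
  calc v * (b-v) * sigd v ≤ 1 - (B-b) * ((b * _root_.sigmoid c) * sigd (b/2)) := hfin
    _ = 1 - (B + c) * ((-c) * _root_.sigmoid c * sigd (-c/2)) := by
        rw [harg, hb]; ring


lemma Lambda_exists (xs c : ℝ) (hxs0 : 0 < xs) (hxse : xs * Real.exp xs = 1 + Real.exp xs)
    (hc : -(1 + xs + Real.exp xs) < c) :
    ∃ Λ : ℝ, 0 ≤ Λ ∧ Λ < 1 ∧ ∀ z : ℝ, 0 ≤ z → z ≤ 1 →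
      |c * sigd (c * _root_.sigmoid (c*z))| * |c * sigd (c*z)| ≤ Λ := by
  rcases le_or_gt 0 c with hcpos | hcneg
  · refine ⟨4 * Real.exp (-2), by positivity, ?_, fun z hz0 _ => pos_case_bound c z hcpos hz0⟩
    have h2 : Real.exp 2 = Real.exp 1 * Real.exp 1 := by rw [← Real.exp_add]; norm_num
    have h3 : Real.exp (-2) * Real.exp 2 = 1 := by rw [← Real.exp_add]; norm_num
    nlinarith [Real.exp_one_gt_d9, Real.exp_pos (-2), Real.exp_pos 2]
  · refine ⟨1 - ((1 + xs + Real.exp xs) + c) * ((-c) * _root_.sigmoid c * sigd (-c/2)), ?_, ?_, ?_⟩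
    · have := neg_case_bound xs c hxs0 hxse hc hcneg 0 (le_refl 0) (by norm_num)
      have h0 : (0:ℝ) ≤ |c * sigd (c * _root_.sigmoid (c*0))| * |c * sigd (c*0)| :=
        mul_nonneg (abs_nonneg _) (abs_nonneg _)
      linarith
    · have h1 : 0 < ((1 + xs + Real.exp xs) + c) := by linarith
      have h2 : 0 < (-c) * _root_.sigmoid c * sigd (-c/2) := by
        apply mul_pos (mul_pos (by linarith) (_root_.sigmoid_pos c)) (sigd_pos _)
      nlinarith
    · exact fun z hz0 hz1 => neg_case_bound xs c hxs0 hxse hc hcneg z hz0 hz1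

/-! ## binomial machinery -/

noncomputable def bb (m j : ℕ) (p : ℝ) : ℝ := (m.choose j : ℝ) * p^j * (1-p)^(m-j)

lemma bb_nonneg {m j : ℕ} {p : ℝ} (h0 : 0 ≤ p) (h1 : p ≤ 1) : 0 ≤ bb m j p := by
  unfold bb
  have : (0:ℝ) ≤ 1 - p := by linarith
  positivity

lemma bb_sum (m : ℕ) (p : ℝ) : ∑ j ∈ Finset.range (m+1), bb m j p = 1 := by
  have h := add_pow p (1-p) m
  have h2 : ((p + (1-p)))^m = 1 := by norm_num
  rw [h2] at h
  rw [h]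
  apply Finset.sum_congr rfl
  intro j _
  unfold bb
  ring


lemma hasDerivAt_bb' (N j : ℕ) (p : ℝ) :
    HasDerivAt (fun q => bb (N+1) j q)
      (((N+1).choose j : ℝ) * ((j:ℝ) * p^(j-1) * (1-p)^(N+1-j)
        - p^j * ((N+1-j : ℕ):ℝ) * (1-p)^(N-j))) p := by
  have h1 := hasDerivAt_pow j p
  have h2 : HasDerivAt (fun q : ℝ => (1-q)^(N+1-j)) (-(((N+1-j : ℕ):ℝ) * (1-p)^(N-j))) p := by
    have hh := (hasDerivAt_pow (N+1-j) (1-p)).comp p ((hasDerivAt_id p).const_sub 1)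
    have he : N+1-j-1 = N-j := by omega
    rw [he] at hh
    exact hh.congr_deriv (by ring)
  have h3 := (h1.const_mul (((N+1).choose j : ℝ))).mul h2
  have hfun : (fun q => bb (N+1) j q)
      = fun q => (((N+1).choose j : ℝ) * q^j) * (1-q)^(N+1-j) := by
    funext q; unfold bb; ring
  rw [hfun]
  exact h3.congr_deriv (by ring)

lemma cast_key1 (N i : ℕ) : (((N+1).choose (i+1) : ℕ) : ℝ) * ((i:ℝ)+1) = ((N:ℝ)+1) * (N.choose i : ℝ) := by
  have h := Nat.add_one_mul_choose_eq N i
  have : ((N.succ * N.choose i : ℕ) : ℝ) = ((N.succ.choose i.succ * i.succ : ℕ) : ℝ) := by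
    exact_mod_cast congrArg (Nat.cast (R := ℝ)) h
  push_cast at this
  linarith

lemma cast_key2 (N j : ℕ) : (((N+1).choose j : ℕ) : ℝ) * ((N+1-j : ℕ) : ℝ) = ((N:ℝ)+1) * (N.choose j : ℝ) := by
  have h := Nat.choose_mul_succ_eq N j
  have : ((N.choose j * (N+1) : ℕ) : ℝ) = (((N+1).choose j * (N+1-j) : ℕ) : ℝ) := by
    exact_mod_cast congrArg (Nat.cast (R := ℝ)) h
  push_cast [Nat.cast_sub] at this ⊢
  · linarith [this]

lemma deriv_sum_identity (N : ℕ) (a : ℕ → ℝ) (p : ℝ) :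
    ∑ j ∈ range (N+2), a j * (((N+1).choose j : ℝ) * ((j:ℝ) * p^(j-1) * (1-p)^(N+1-j)
        - p^j * ((N+1-j : ℕ):ℝ) * (1-p)^(N-j)))
    = ((N:ℝ)+1) * ∑ j ∈ range (N+1), (a (j+1) - a j) * bb N j p := by
  have hsplit : ∀ j ∈ range (N+2), a j * (((N+1).choose j : ℝ) * ((j:ℝ) * p^(j-1) * (1-p)^(N+1-j)
        - p^j * ((N+1-j : ℕ):ℝ) * (1-p)^(N-j)))
      = (a j * ((((N+1).choose j : ℝ)) * (j:ℝ)) * p^(j-1) * (1-p)^(N+1-j))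
        - (a j * ((((N+1).choose j : ℝ)) * ((N+1-j:ℕ):ℝ)) * p^j * (1-p)^(N-j)) := by
    intro j _; ring
  rw [Finset.sum_congr rfl hsplit, Finset.sum_sub_distrib]
  have hS1 : ∑ j ∈ range (N+2), (a j * ((((N+1).choose j : ℝ)) * (j:ℝ)) * p^(j-1) * (1-p)^(N+1-j))
      = ((N:ℝ)+1) * ∑ j ∈ range (N+1), a (j+1) * bb N j p := by
    rw [Finset.sum_range_succ']
    have h0 : a 0 * ((((N+1).choose 0 : ℝ)) * ((0:ℕ):ℝ)) * p^(0-1) * (1-p)^(N+1-0) = 0 := by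
      simp
    rw [h0, add_zero, Finset.mul_sum]
    apply Finset.sum_congr rfl
    intro i hi
    have he1 : i+1-1 = i := by omega
    have he2 : N+1-(i+1) = N-i := by omega
    rw [he1, he2]
    have hck := cast_key1 N i
    push_cast
    rw [hck]
    unfold bb
    ring
  have hS2 : ∑ j ∈ range (N+2), (a j * ((((N+1).choose j : ℝ)) * ((N+1-j:ℕ):ℝ)) * p^j * (1-p)^(N-j))
      = ((N:ℝ)+1) * ∑ j ∈ range (N+1), a j * bb N j p := by
    rw [Finset.sum_range_succ]
    have h0 : a (N+1) * ((((N+1).choose (N+1) : ℝ)) * ((N+1-(N+1):ℕ):ℝ)) * p^(N+1) * (1-p)^(N-(N+1)) = 0 := by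
      simp
    rw [h0, add_zero, Finset.mul_sum]
    apply Finset.sum_congr rfl
    intro j hj
    have hck := cast_key2 N j
    rw [hck]
    unfold bb
    ring
  rw [hS1, hS2, ← mul_sub, ← Finset.sum_sub_distrib]
  congr 1
  apply Finset.sum_congr rfl
  intro j _
  ring

lemma hasDerivAt_bbsum (N : ℕ) (a : ℕ → ℝ) (p : ℝ) :
    HasDerivAt (fun q => ∑ j ∈ range (N+2), a j * bb (N+1) j q)
      (((N:ℝ)+1) * ∑ j ∈ range (N+1), (a (j+1) - a j) * bb N j p) p := by
  have h := HasDerivAt.sum (u := range (N+2))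
    (A := fun j q => a j * bb (N+1) j q)
    (A' := fun j => a j * (((N+1).choose j : ℝ) * ((j:ℝ) * p^(j-1) * (1-p)^(N+1-j)
        - p^j * ((N+1-j : ℕ):ℝ) * (1-p)^(N-j))))
    (fun j _ => (hasDerivAt_bb' N j p).const_mul (a j))
  rw [← deriv_sum_identity N a p]
  rw [Finset.sum_fn] at h; exact h


/-- Lipschitz bound for weighted binomial sums. -/
lemma bbsum_lipschitz (N : ℕ) (a : ℕ → ℝ) (hjump : ∀ j, |a (j+1) - a j| ≤ 1)
    {p q : ℝ} (hp : p ∈ Set.Icc (0:ℝ) 1) (hq : q ∈ Set.Icc (0:ℝ) 1) :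
    |∑ j ∈ range (N+2), a j * bb (N+1) j p - ∑ j ∈ range (N+2), a j * bb (N+1) j q|
      ≤ ((N:ℝ)+1) * |p - q| := by
  have hbound : ∀ x ∈ Set.Icc (0:ℝ) 1,
      ‖((N:ℝ)+1) * ∑ j ∈ range (N+1), (a (j+1) - a j) * bb N j x‖ ≤ (N:ℝ)+1 := by
    intro x hx
    rw [Real.norm_eq_abs, abs_mul, abs_of_nonneg (by positivity : (0:ℝ) ≤ (N:ℝ)+1)]
    have h1 : |∑ j ∈ range (N+1), (a (j+1) - a j) * bb N j x| ≤ 1 := by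
      calc |∑ j ∈ range (N+1), (a (j+1) - a j) * bb N j x|
          ≤ ∑ j ∈ range (N+1), |(a (j+1) - a j) * bb N j x| := Finset.abs_sum_le_sum_abs _ _
        _ ≤ ∑ j ∈ range (N+1), bb N j x := by
            apply Finset.sum_le_sum
            intro j _
            rw [abs_mul, abs_of_nonneg (bb_nonneg hx.1 hx.2)]
            calc |a (j+1) - a j| * bb N j x ≤ 1 * bb N j x :=
                  mul_le_mul_of_nonneg_right (hjump j) (bb_nonneg hx.1 hx.2)
              _ = bb N j x := one_mul _
        _ = 1 := bb_sum N x
    nlinarith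
  have := Convex.norm_image_sub_le_of_norm_hasDerivWithin_le
    (f := fun q => ∑ j ∈ range (N+2), a j * bb (N+1) j q)
    (f' := fun x => ((N:ℝ)+1) * ∑ j ∈ range (N+1), (a (j+1) - a j) * bb N j x)
    (fun x _ => (hasDerivAt_bbsum N a x).hasDerivWithinAt) hbound
    (convex_Icc 0 1) hq hp
  simpa [Real.norm_eq_abs] using this

/-- Monotonicity of weighted binomial sums in p (for monotone weights). -/
lemma bbsum_mono (N : ℕ) (a : ℕ → ℝ) (hmono : ∀ j, a j ≤ a (j+1))
    {p q : ℝ} (hp : p ∈ Set.Icc (0:ℝ) 1) (hq : q ∈ Set.Icc (0:ℝ) 1) (hpq : p ≤ q) :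
    ∑ j ∈ range (N+2), a j * bb (N+1) j p ≤ ∑ j ∈ range (N+2), a j * bb (N+1) j q := by
  have hm : MonotoneOn (fun x => ∑ j ∈ range (N+2), a j * bb (N+1) j x) (Set.Icc (0:ℝ) 1) := by
    apply monotoneOn_of_deriv_nonneg (convex_Icc 0 1)
      (fun x hx => (hasDerivAt_bbsum N a x).continuousAt.continuousWithinAt)
      (fun x hx => (hasDerivAt_bbsum N a x).differentiableAt.differentiableWithinAt)
    intro x hx
    rw [(hasDerivAt_bbsum N a x).deriv]
    have hx' : x ∈ Set.Icc (0:ℝ) 1 := interior_subset hx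
    apply mul_nonneg (by positivity)
    apply Finset.sum_nonneg
    intro j _
    exact mul_nonneg (by linarith [hmono j]) (bb_nonneg hx'.1 hx'.2)
  exact hm hp hq hpq

/-- CDF antitone in p. -/
lemma cdf_antitone (N k : ℕ) (hk : k ≤ N) {p q : ℝ}
    (hp : p ∈ Set.Icc (0:ℝ) 1) (hq : q ∈ Set.Icc (0:ℝ) 1) (hpq : p ≤ q) :
    ∑ j ∈ range (k+1), bb (N+1) j q ≤ ∑ j ∈ range (k+1), bb (N+1) j p := by
  set a : ℕ → ℝ := fun j => if j ≤ k then 1 else 0 with ha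
  have hsum : ∀ r : ℝ, ∑ j ∈ range (N+2), a j * bb (N+1) j r = ∑ j ∈ range (k+1), bb (N+1) j r := by
    intro r
    rw [show range (k+1) = (range (N+2)).filter (fun j => j ≤ k) from by
      ext j; simp [Finset.mem_filter, Finset.mem_range]; omega]
    rw [Finset.sum_filter]
    apply Finset.sum_congr rfl
    intro j _
    simp only [ha]
    split_ifs <;> simp
  have hanti : AntitoneOn (fun x => ∑ j ∈ range (N+2), a j * bb (N+1) j x) (Set.Icc (0:ℝ) 1) := by
    apply antitoneOn_of_deriv_nonpos (convex_Icc 0 1)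
      (fun x hx => (hasDerivAt_bbsum N a x).continuousAt.continuousWithinAt)
      (fun x hx => (hasDerivAt_bbsum N a x).differentiableAt.differentiableWithinAt)
    intro x hx
    rw [(hasDerivAt_bbsum N a x).deriv]
    have hx' : x ∈ Set.Icc (0:ℝ) 1 := interior_subset hx
    have hsingle : ∑ j ∈ range (N+1), (a (j+1) - a j) * bb N j x = -bb N k x := by
      rw [Finset.sum_eq_single k]
      · simp only [ha]
        rw [if_neg (by omega), if_pos (le_refl k)]
        ring
      · intro j _ hjk
        simp only [ha]
        have : (if j+1 ≤ k then (1:ℝ) else 0) = (if j ≤ k then (1:ℝ) else 0) := by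
          split_ifs <;> first | rfl | omega
        rw [this]; ring
      · intro h
        exact absurd (Finset.mem_range.mpr (by omega)) h
    rw [hsingle]
    have := bb_nonneg (m := N) (j := k) hx'.1 hx'.2
    nlinarith [Nat.cast_nonneg (α := ℝ) N]
  have := hanti hp hq hpq
  simp only [] at this
  rw [hsum p, hsum q] at this
  exact this

lemma bb_mean (m : ℕ) (p : ℝ) : ∑ k ∈ range (m+1), bb m k p * (k:ℝ) = m * p := by
  rcases m with _ | M
  · simp [bb]
  · rw [Finset.sum_range_succ']
    have h0 : bb (M+1) 0 p * ((0:ℕ):ℝ) = 0 := by simp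
    rw [h0, add_zero]
    have hterm : ∀ i ∈ range (M+1), bb (M+1) (i+1) p * ((i+1:ℕ):ℝ)
        = ((M:ℝ)+1) * p * bb M i p := by
      intro i _
      unfold bb
      rw [show M+1-(i+1) = M-i from by omega]
      have hck := cast_key1 M i
      push_cast
      linear_combination (p^(i+1) * (1-p)^(M-i)) * hck
    rw [Finset.sum_congr rfl hterm, ← Finset.mul_sum, bb_sum]
    push_cast
    ring


lemma bb_sq (m : ℕ) (p : ℝ) :
    ∑ k ∈ range (m+1), bb m k p * ((k:ℝ) * ((k:ℝ)-1)) = (m:ℝ) * ((m:ℝ)-1) * p^2 := by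
  rcases m with _ | M
  · simp [bb]
  rcases M with _ | M
  · norm_num [Finset.sum_range_succ, bb]
  · rw [Finset.sum_range_succ', Finset.sum_range_succ']
    have h0 : bb (M+2) 0 p * (((0:ℕ):ℝ) * (((0:ℕ):ℝ)-1)) = 0 := by norm_num
    have h1 : bb (M+2) (0+1) p * (((0+1:ℕ):ℝ) * (((0+1:ℕ):ℝ)-1)) = 0 := by norm_num
    rw [h0, h1, add_zero, add_zero]
    have hterm : ∀ i ∈ range (M+1), bb (M+2) (i+1+1) p * (((i+1+1:ℕ):ℝ) * (((i+1+1:ℕ):ℝ)-1))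
        = ((M:ℝ)+2) * ((M:ℝ)+1) * p^2 * bb M i p := by
      intro i _
      unfold bb
      rw [show M+2-(i+1+1) = M-i from by omega]
      have hck1 := cast_key1 (M+1) (i+1)
      have hck2 := cast_key1 M i
      push_cast at hck1 hck2 ⊢
      linear_combination ((p^(i+2) * (1-p)^(M-i)) * ((i:ℝ)+1)) * hck1
        + (((M:ℝ)+2) * p^(i+2) * (1-p)^(M-i)) * hck2
    rw [Finset.sum_congr rfl hterm, ← Finset.mul_sum, bb_sum]
    push_cast
    ring

lemma bb_var (m : ℕ) (p : ℝ) :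
    ∑ k ∈ range (m+1), bb m k p * ((k:ℝ) - m*p)^2 = (m:ℝ) * p * (1-p) := by
  have hexp : ∀ k ∈ range (m+1), bb m k p * ((k:ℝ) - m*p)^2
      = bb m k p * ((k:ℝ) * ((k:ℝ)-1)) + (1 - 2*(m:ℝ)*p) * (bb m k p * (k:ℝ))
        + ((m:ℝ)*p)^2 * bb m k p := by
    intro k _; ring
  rw [Finset.sum_congr rfl hexp]
  rw [Finset.sum_add_distrib, Finset.sum_add_distrib, ← Finset.mul_sum, ← Finset.mul_sum]
  rw [bb_sq, bb_mean, bb_sum]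
  ring

lemma bb_absdev (m : ℕ) {p : ℝ} (hp : p ∈ Set.Icc (0:ℝ) 1) :
    ∑ k ∈ range (m+1), bb m k p * |(k:ℝ) - m*p| ≤ Real.sqrt m / 2 := by
  have hcs := Finset.sum_mul_sq_le_sq_mul_sq (range (m+1))
    (fun k => Real.sqrt (bb m k p)) (fun k => Real.sqrt (bb m k p) * |(k:ℝ) - m*p|)
  have he1 : ∀ k ∈ range (m+1), Real.sqrt (bb m k p) * (Real.sqrt (bb m k p) * |(k:ℝ) - m*p|)
      = bb m k p * |(k:ℝ) - m*p| := by
    intro k _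
    rw [← mul_assoc, Real.mul_self_sqrt (bb_nonneg hp.1 hp.2)]
  have he2 : ∀ k ∈ range (m+1), Real.sqrt (bb m k p)^2 = bb m k p := by
    intro k _; exact Real.sq_sqrt (bb_nonneg hp.1 hp.2)
  have he3 : ∀ k ∈ range (m+1), (Real.sqrt (bb m k p) * |(k:ℝ) - m*p|)^2
      = bb m k p * ((k:ℝ) - m*p)^2 := by
    intro k _
    rw [mul_pow, Real.sq_sqrt (bb_nonneg hp.1 hp.2), sq_abs]
  rw [Finset.sum_congr rfl he1, Finset.sum_congr rfl he2, Finset.sum_congr rfl he3,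
    bb_sum, bb_var, one_mul] at hcs
  have hvar : (m:ℝ) * p * (1-p) ≤ (m:ℝ)/4 := by nlinarith [hp.1, hp.2, Nat.cast_nonneg (α := ℝ) m, sq_nonneg (p - 1/2)]
  have hnn : (0:ℝ) ≤ ∑ k ∈ range (m+1), bb m k p * |(k:ℝ) - m*p| := by
    apply Finset.sum_nonneg
    intro k _
    exact mul_nonneg (bb_nonneg hp.1 hp.2) (abs_nonneg _)
  have hsq : (∑ k ∈ range (m+1), bb m k p * |(k:ℝ) - m*p|)^2 ≤ (m:ℝ)/4 := le_trans hcs hvar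
  have : ∑ k ∈ range (m+1), bb m k p * |(k:ℝ) - m*p| ≤ Real.sqrt ((m:ℝ)/4) :=
    (Real.le_sqrt hnn (by positivity)).mpr hsq
  calc ∑ k ∈ range (m+1), bb m k p * |(k:ℝ) - m*p| ≤ Real.sqrt ((m:ℝ)/4) := this
    _ = Real.sqrt m / 2 := by
        rw [show ((m:ℝ)/4) = (m:ℝ) * (1/2)^2 from by ring, Real.sqrt_mul (Nat.cast_nonneg m),
          Real.sqrt_sq (by norm_num)]
        ring


noncomputable def fd (c z : ℝ) : ℝ := c * sigd (c*z)
noncomputable def qq (c : ℝ) (N j : ℕ) : ℝ := _root_.sigmoid (c * ((j:ℝ)/((N:ℝ)+1)))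
noncomputable def Hf (c : ℝ) (N : ℕ) (p : ℝ) : ℝ := ∑ j ∈ range (N+2), qq c N j * bb (N+1) j p
noncomputable def psi1 (c : ℝ) (N : ℕ) (j : ℕ) : ℝ := Hf c N (qq c N j)
noncomputable def Gf (c : ℝ) (N : ℕ) (p : ℝ) : ℝ := ∑ j ∈ range (N+2), psi1 c N j * bb (N+1) j p
noncomputable def eps1 (c : ℝ) (N : ℕ) : ℝ :=
  (c^2/4) * (Real.sqrt N/(2*((N:ℝ)+1)) + 2/((N:ℝ)+1))
noncomputable def EE (c : ℝ) (N : ℕ) : ℝ :=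
  (|c|/4) * eps1 c N + (c^2/4) * ((|c|/4) * ((|c|/4) / ((N:ℝ)+1)))

lemma eps1_nonneg (c : ℝ) (N : ℕ) : 0 ≤ eps1 c N := by
  unfold eps1; positivity
lemma EE_nonneg (c : ℝ) (N : ℕ) : 0 ≤ EE c N := by
  unfold EE eps1; positivity

lemma hasDerivAt_fc (c z : ℝ) : HasDerivAt (fun z => _root_.sigmoid (c*z)) (fd c z) z := by
  have h := (_root_.hasDerivAt_sigmoid (c*z)).comp z ((hasDerivAt_id z).const_mul c)
  refine h.congr_deriv ?_
  unfold fd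
  simp [mul_comm]

lemma fd_abs_le (c z : ℝ) : |fd c z| ≤ |c|/4 := by
  unfold fd
  rw [abs_mul, abs_of_pos (sigd_pos _)]
  have := sigd_le_quarter (c*z)
  nlinarith [abs_nonneg c, sigd_pos (c*z)]

lemma fd_lip (c a b : ℝ) : |fd c a - fd c b| ≤ (c^2/4)*|a-b| := by
  unfold fd
  rw [← mul_sub, abs_mul]
  calc |c| * |sigd (c*a) - sigd (c*b)| ≤ |c| * ((1/4) * |c*a - c*b|) :=
        mul_le_mul_of_nonneg_left (sigd_lipschitz _ _) (abs_nonneg c)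
    _ = (c^2/4) * |a-b| := by
        rw [← mul_sub, abs_mul, ← sq_abs]
        ring

lemma qq_mem (c : ℝ) (N j : ℕ) : qq c N j ∈ Set.Icc (0:ℝ) 1 :=
  ⟨le_of_lt (_root_.sigmoid_pos _), le_of_lt (_root_.sigmoid_lt_one _)⟩

lemma qq_step (c : ℝ) (N j : ℕ) : ∃ ξ : ℝ, (j:ℝ)/((N:ℝ)+1) < ξ ∧ ξ < ((j:ℝ)+1)/((N:ℝ)+1) ∧
    fd c ξ = ((N:ℝ)+1) * (qq c N (j+1) - qq c N j) := by
  have hN : (0:ℝ) < (N:ℝ)+1 := by positivity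
  have hab : (j:ℝ)/((N:ℝ)+1) < ((j:ℝ)+1)/((N:ℝ)+1) := by
    rw [div_lt_div_iff₀ hN hN]
    nlinarith
  obtain ⟨ξ, hξ, heq⟩ := exists_hasDerivAt_eq_slope (fun z => _root_.sigmoid (c*z)) (fun z => fd c z)
    hab (fun z _ => (hasDerivAt_fc c z).continuousAt.continuousWithinAt)
    (fun z _ => hasDerivAt_fc c z)
  refine ⟨ξ, hξ.1, hξ.2, ?_⟩
  rw [heq]
  unfold qq
  have hcast : ((j+1 : ℕ):ℝ) = (j:ℝ)+1 := by push_cast; ring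
  rw [hcast]
  field_simp
  ring

lemma qq_diff_le (c : ℝ) (N j : ℕ) : |qq c N (j+1) - qq c N j| ≤ (|c|/4)/((N:ℝ)+1) := by
  obtain ⟨ξ, _, _, heq⟩ := qq_step c N j
  have hN : (0:ℝ) < (N:ℝ)+1 := by positivity
  have := fd_abs_le c ξ
  rw [heq, abs_mul, abs_of_pos hN] at this
  rw [le_div_iff₀ hN]
  calc |qq c N (j+1) - qq c N j| * ((N:ℝ)+1) = ((N:ℝ)+1) * |qq c N (j+1) - qq c N j| := by ring
    _ ≤ |c|/4 := this

lemma qq_mono_of_nonneg (c : ℝ) (hc : 0 ≤ c) (N : ℕ) : ∀ j, qq c N j ≤ qq c N (j+1) := by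
  intro j
  apply _root_.sigmoid_monotone
  have hN : (0:ℝ) < (N:ℝ)+1 := by positivity
  apply mul_le_mul_of_nonneg_left _ hc
  rw [div_le_div_iff₀ hN hN]
  push_cast
  nlinarith

lemma qq_anti_of_nonpos (c : ℝ) (hc : c ≤ 0) (N : ℕ) : ∀ j, qq c N (j+1) ≤ qq c N j := by
  intro j
  apply _root_.sigmoid_monotone
  have hN : (0:ℝ) < (N:ℝ)+1 := by positivity
  have h1 : (j:ℝ)/((N:ℝ)+1) ≤ ((j:ℝ)+1)/((N:ℝ)+1) := by
    rw [div_le_div_iff₀ hN hN]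
    nlinarith
  push_cast
  nlinarith [h1]

lemma psi1_mono (c : ℝ) (N : ℕ) : ∀ j, psi1 c N j ≤ psi1 c N (j+1) := by
  intro j
  unfold psi1 Hf
  rcases le_or_gt 0 c with hc | hc
  · exact bbsum_mono N (qq c N) (qq_mono_of_nonneg c hc N) (qq_mem c N j) (qq_mem c N (j+1))
      (qq_mono_of_nonneg c hc N j)
  · have hanti := qq_anti_of_nonpos c (le_of_lt hc) N
    have hstep := bbsum_mono N (fun k => -(qq c N k)) (fun k => by simpa using neg_le_neg (hanti k))
      (qq_mem c N (j+1)) (qq_mem c N j) (hanti j)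
    have he : ∀ r : ℝ, ∑ k ∈ range (N+2), -(qq c N k) * bb (N+1) k r
        = -∑ k ∈ range (N+2), qq c N k * bb (N+1) k r := by
      intro r
      rw [← Finset.sum_neg_distrib]
      exact Finset.sum_congr rfl (fun k _ => by ring)
    rw [he, he] at hstep
    linarith

lemma qq_succ (c : ℝ) (N j : ℕ) : qq c N (j+1) = _root_.sigmoid (c * (((j:ℝ)+1)/((N:ℝ)+1))) := by
  unfold qq; push_cast; ring_nf

lemma Hderiv_est (c : ℝ) (N : ℕ) {ζ : ℝ} (hζ : ζ ∈ Set.Icc (0:ℝ) 1) :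
    |((N:ℝ)+1) * ∑ j ∈ range (N+1), (qq c N (j+1) - qq c N j) * bb N j ζ - fd c ζ|
      ≤ eps1 c N := by
  have hN : (0:ℝ) < (N:ℝ)+1 := by positivity
  choose ξ h1 h2 h3 using fun j => qq_step c N j
  have hsum1 : ((N:ℝ)+1) * ∑ j ∈ range (N+1), (qq c N (j+1) - qq c N j) * bb N j ζ
      = ∑ j ∈ range (N+1), bb N j ζ * fd c (ξ j) := by
    rw [Finset.mul_sum]
    apply Finset.sum_congr rfl
    intro j _
    rw [h3 j]; ring
  have hfd : fd c ζ = ∑ j ∈ range (N+1), bb N j ζ * fd c ζ := by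
    rw [← Finset.sum_mul, bb_sum N ζ, one_mul]
  rw [hsum1]
  nth_rewrite 1 [hfd]
  rw [← Finset.sum_sub_distrib]
  have hxi : ∀ j, |ξ j - ζ| ≤ (|(j:ℝ) - N*ζ| + 2)/((N:ℝ)+1) := by
    intro j
    have ha := (div_lt_iff₀ hN).mp (h1 j)
    have hb := (lt_div_iff₀ hN).mp (h2 j)
    rw [le_div_iff₀ hN, ← abs_of_pos hN, ← abs_mul]
    rw [abs_le]
    constructor
    · nlinarith [le_abs_self ((j:ℝ) - N*ζ), neg_abs_le ((j:ℝ) - N*ζ), hζ.1, hζ.2,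
        abs_nonneg ((j:ℝ) - N*ζ)]
    · nlinarith [le_abs_self ((j:ℝ) - N*ζ), neg_abs_le ((j:ℝ) - N*ζ), hζ.1, hζ.2,
        abs_nonneg ((j:ℝ) - N*ζ)]
  calc |∑ j ∈ range (N+1), (bb N j ζ * fd c (ξ j) - bb N j ζ * fd c ζ)|
      ≤ ∑ j ∈ range (N+1), |bb N j ζ * fd c (ξ j) - bb N j ζ * fd c ζ| :=
        Finset.abs_sum_le_sum_abs _ _
    _ ≤ ∑ j ∈ range (N+1), bb N j ζ * ((c^2/4) * ((|(j:ℝ) - N*ζ| + 2)/((N:ℝ)+1))) := by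
        apply Finset.sum_le_sum
        intro j _
        rw [← mul_sub, abs_mul, abs_of_nonneg (bb_nonneg hζ.1 hζ.2)]
        apply mul_le_mul_of_nonneg_left _ (bb_nonneg hζ.1 hζ.2)
        calc |fd c (ξ j) - fd c ζ| ≤ (c^2/4) * |ξ j - ζ| := fd_lip c (ξ j) ζ
          _ ≤ (c^2/4) * ((|(j:ℝ) - N*ζ| + 2)/((N:ℝ)+1)) :=
              mul_le_mul_of_nonneg_left (hxi j) (by positivity)
    _ = ∑ j ∈ range (N+1), ((c^2/4)/((N:ℝ)+1) * (bb N j ζ * |(j:ℝ) - N*ζ|)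
          + (c^2/4)/((N:ℝ)+1) * (2 * bb N j ζ)) := by
        apply Finset.sum_congr rfl
        intro j _
        field_simp
    _ = (c^2/4)/((N:ℝ)+1) * ((∑ j ∈ range (N+1), bb N j ζ * |(j:ℝ) - N*ζ|)
          + 2 * ∑ j ∈ range (N+1), bb N j ζ) := by
        rw [Finset.sum_add_distrib, ← Finset.mul_sum, ← Finset.mul_sum, ← Finset.mul_sum]
        ring
    _ ≤ eps1 c N := by
        rw [bb_sum]
        have habs := bb_absdev N hζ
        have h5 : (c^2/4)/((N:ℝ)+1) * ((∑ j ∈ range (N+1), bb N j ζ * |(j:ℝ) - N*ζ|) + 2*1)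
            ≤ (c^2/4)/((N:ℝ)+1) * (Real.sqrt N/2 + 2) := by
          apply mul_le_mul_of_nonneg_left _ (by positivity)
          linarith
        have heq : (c^2/4)/((N:ℝ)+1) * (Real.sqrt N/2 + 2) = eps1 c N := by
          unfold eps1
          field_simp
        linarith [h5]

set_option maxHeartbeats 2000000 in
lemma Hstep (c : ℝ) (N : ℕ) (Λ : ℝ)
    (hΛ : ∀ z : ℝ, 0 ≤ z → z ≤ 1 →
      |c * sigd (c * _root_.sigmoid (c*z))| * |c * sigd (c*z)| ≤ Λ)
    {j : ℕ} (hj : j ≤ N) :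
    ((N:ℝ)+1) * |psi1 c N (j+1) - psi1 c N j| ≤ Λ + EE c N := by
  have hN : (0:ℝ) < (N:ℝ)+1 := by positivity
  obtain ⟨ξ, hξ1, hξ2, hξ3⟩ := qq_step c N j
  have hξ0 : 0 ≤ ξ := le_trans (by positivity : (0:ℝ) ≤ (j:ℝ)/((N:ℝ)+1)) (le_of_lt hξ1)
  have hξle1 : ξ ≤ 1 := by
    have hj' : (j:ℝ) ≤ N := Nat.cast_le.mpr hj
    have : ((j:ℝ)+1)/((N:ℝ)+1) ≤ 1 := by
      rw [div_le_one hN]; linarith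
    linarith [hξ2]
  obtain ⟨u, hu⟩ : ∃ x:ℝ, x = qq c N j := ⟨_, rfl⟩
  obtain ⟨v, hv⟩ : ∃ x:ℝ, x = qq c N (j+1) := ⟨_, rfl⟩
  have hu' : u = _root_.sigmoid (c * ((j:ℝ)/((N:ℝ)+1))) := hu
  have hv' : v = _root_.sigmoid (c * (((j:ℝ)+1)/((N:ℝ)+1))) := by rw [hv, qq_succ]
  rw [← hu, ← hv] at hξ3
  have hpsi_v : psi1 c N (j+1) = Hf c N v := by rw [hv]; rfl
  have hpsi_u : psi1 c N j = Hf c N u := by rw [hu]; rfl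
  rw [hpsi_v, hpsi_u]
  -- _root_.sigmoid (c ξ) lies between u and v
  have hfmem : min u v ≤ _root_.sigmoid (c*ξ) ∧ _root_.sigmoid (c*ξ) ≤ max u v := by
    rcases le_or_gt 0 c with hc | hc
    · have h1 : u ≤ _root_.sigmoid (c*ξ) := by
        rw [hu']
        exact _root_.sigmoid_monotone (mul_le_mul_of_nonneg_left (le_of_lt hξ1) hc)
      have h2 : _root_.sigmoid (c*ξ) ≤ v := by
        rw [hv']
        exact _root_.sigmoid_monotone (mul_le_mul_of_nonneg_left (le_of_lt hξ2) hc)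
      exact ⟨le_trans (min_le_left u v) h1, le_trans h2 (le_max_right u v)⟩
    · have h1 : _root_.sigmoid (c*ξ) ≤ u := by
        rw [hu']
        exact _root_.sigmoid_monotone (mul_le_mul_of_nonpos_left (le_of_lt hξ1) (le_of_lt hc))
      have h2 : v ≤ _root_.sigmoid (c*ξ) := by
        rw [hv']
        exact _root_.sigmoid_monotone (mul_le_mul_of_nonpos_left (le_of_lt hξ2) (le_of_lt hc))
      exact ⟨le_trans (min_le_right u v) h2, le_trans h1 (le_max_left u v)⟩
  have hu01 : u ∈ Set.Icc (0:ℝ) 1 := hu ▸ qq_mem c N j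
  have hv01 : v ∈ Set.Icc (0:ℝ) 1 := hv ▸ qq_mem c N (j+1)
  set K := |fd c (_root_.sigmoid (c*ξ))| + (c^2/4) * |v - u| + eps1 c N with hK
  have hKbound : ∀ ζ ∈ Set.Icc (min u v) (max u v),
      ‖((N:ℝ)+1) * ∑ k ∈ range (N+1), (qq c N (k+1) - qq c N k) * bb N k ζ‖ ≤ K := by
    intro ζ hζmem
    have hζ01 : ζ ∈ Set.Icc (0:ℝ) 1 := by
      constructor
      · exact le_trans (le_min hu01.1 hv01.1) hζmem.1
      · exact le_trans hζmem.2 (max_le hu01.2 hv01.2)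
    have hest := Hderiv_est c N hζ01
    have hl : |fd c ζ - fd c (_root_.sigmoid (c*ξ))| ≤ (c^2/4) * |v - u| := by
      calc |fd c ζ - fd c (_root_.sigmoid (c*ξ))| ≤ (c^2/4) * |ζ - _root_.sigmoid (c*ξ)| := fd_lip _ _ _
        _ ≤ (c^2/4) * |v - u| := by
            apply mul_le_mul_of_nonneg_left _ (by positivity)
            have hd : max u v - min u v = |v - u| := by
              rw [max_sub_min_eq_abs, abs_sub_comm]
            rw [abs_le]
            constructor <;> nlinarith [hζmem.1, hζmem.2, hfmem.1, hfmem.2]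
    rw [Real.norm_eq_abs]
    have htri : |((N:ℝ)+1) * ∑ k ∈ range (N+1), (qq c N (k+1) - qq c N k) * bb N k ζ|
        ≤ |fd c ζ| + eps1 c N := by
      have := abs_sub_abs_le_abs_sub (((N:ℝ)+1) * ∑ k ∈ range (N+1), (qq c N (k+1) - qq c N k) * bb N k ζ) (fd c ζ)
      linarith [hest, abs_nonneg (fd c ζ)]
    have htri2 : |fd c ζ| ≤ |fd c (_root_.sigmoid (c*ξ))| + (c^2/4) * |v - u| := by
      have := abs_sub_abs_le_abs_sub (fd c ζ) (fd c (_root_.sigmoid (c*ξ)))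
      linarith [hl]
    rw [hK]
    linarith
  have hlip := Convex.norm_image_sub_le_of_norm_hasDerivWithin_le
    (f := fun p => ∑ k ∈ range (N+2), qq c N k * bb (N+1) k p)
    (f' := fun ζ => ((N:ℝ)+1) * ∑ k ∈ range (N+1), (qq c N (k+1) - qq c N k) * bb N k ζ)
    (fun ζ _ => (hasDerivAt_bbsum N (qq c N) ζ).hasDerivWithinAt) hKbound
    (convex_Icc _ _) (Set.mem_Icc.mpr ⟨min_le_left u v, le_max_left u v⟩)
    (Set.mem_Icc.mpr ⟨min_le_right u v, le_max_right u v⟩)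
  -- hlip : ‖Hf v - Hf u‖ ≤ K * ‖v - u‖
  have hHlip : |Hf c N v - Hf c N u| ≤ K * |v - u| := by
    simpa [Real.norm_eq_abs, Hf] using hlip
  have hKnn : 0 ≤ K := by
    rw [hK]
    have := eps1_nonneg c N
    positivity
  have hfdxi : |fd c ξ| = ((N:ℝ)+1) * |v - u| := by
    rw [hξ3, abs_mul, abs_of_pos hN]
  have hstep1 : ((N:ℝ)+1) * |Hf c N v - Hf c N u| ≤ K * |fd c ξ| := by
    rw [hfdxi]
    calc ((N:ℝ)+1) * |Hf c N v - Hf c N u| ≤ ((N:ℝ)+1) * (K * |v - u|) :=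
          mul_le_mul_of_nonneg_left hHlip (le_of_lt hN)
      _ = K * (((N:ℝ)+1) * |v - u|) := by ring
  have hΛξ := hΛ ξ hξ0 hξle1
  have hvu : |v - u| ≤ (|c|/4)/((N:ℝ)+1) := by
    rw [hv, hu]
    exact qq_diff_le c N j
  have hfdxi_le : |fd c ξ| ≤ |c|/4 := fd_abs_le c ξ
  have hfdfxi_le : |fd c (_root_.sigmoid (c*ξ))| ≤ |c|/4 := fd_abs_le c _
  have hfd_nn : 0 ≤ |fd c ξ| := abs_nonneg _
  calc ((N:ℝ)+1) * |Hf c N v - Hf c N u| ≤ K * |fd c ξ| := hstep1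
    _ = |fd c (_root_.sigmoid (c*ξ))| * |fd c ξ| + (c^2/4) * |v - u| * |fd c ξ|
        + eps1 c N * |fd c ξ| := by rw [hK]; ring
    _ ≤ Λ + EE c N := by
        have e1 : |fd c (_root_.sigmoid (c*ξ))| * |fd c ξ| ≤ Λ := hΛξ
        have e2 : (c^2/4) * |v - u| * |fd c ξ| ≤ (c^2/4) * ((|c|/4)/((N:ℝ)+1)) * (|c|/4) := by
          apply mul_le_mul _ hfdxi_le hfd_nn (by positivity)
          exact mul_le_mul_of_nonneg_left hvu (by positivity)
        have e3 : eps1 c N * |fd c ξ| ≤ eps1 c N * (|c|/4) :=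
          mul_le_mul_of_nonneg_left hfdxi_le (eps1_nonneg c N)
        unfold EE
        nlinarith [e1, e2, e3]

lemma twostep (c : ℝ) (N : ℕ) (Λ : ℝ) (hΛ0 : 0 ≤ Λ)
    (hΛ : ∀ z : ℝ, 0 ≤ z → z ≤ 1 →
      |c * sigd (c * _root_.sigmoid (c*z))| * |c * sigd (c*z)| ≤ Λ) (i : ℕ) :
    |Gf c N (qq c N (i+1)) - Gf c N (qq c N i)|
      ≤ (Λ + EE c N) * |qq c N (i+1) - qq c N i| := by
  have hN : (0:ℝ) < (N:ℝ)+1 := by positivity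
  have hG' : ∀ p ∈ Set.Icc (0:ℝ) 1,
      ‖((N:ℝ)+1) * ∑ j ∈ range (N+1), (psi1 c N (j+1) - psi1 c N j) * bb N j p‖
        ≤ Λ + EE c N := by
    intro p hp
    rw [Real.norm_eq_abs, abs_mul, abs_of_pos hN]
    calc ((N:ℝ)+1) * |∑ j ∈ range (N+1), (psi1 c N (j+1) - psi1 c N j) * bb N j p|
        ≤ ((N:ℝ)+1) * ∑ j ∈ range (N+1), |psi1 c N (j+1) - psi1 c N j| * bb N j p := by
          apply mul_le_mul_of_nonneg_left _ (le_of_lt hN)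
          calc |∑ j ∈ range (N+1), (psi1 c N (j+1) - psi1 c N j) * bb N j p|
              ≤ ∑ j ∈ range (N+1), |(psi1 c N (j+1) - psi1 c N j) * bb N j p| :=
                Finset.abs_sum_le_sum_abs _ _
            _ = ∑ j ∈ range (N+1), |psi1 c N (j+1) - psi1 c N j| * bb N j p := by
                apply Finset.sum_congr rfl
                intro j _
                rw [abs_mul, abs_of_nonneg (bb_nonneg hp.1 hp.2)]
      _ = ∑ j ∈ range (N+1), (((N:ℝ)+1) * |psi1 c N (j+1) - psi1 c N j|) * bb N j p := by
          rw [Finset.mul_sum]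
          apply Finset.sum_congr rfl
          intro j _; ring
      _ ≤ ∑ j ∈ range (N+1), (Λ + EE c N) * bb N j p := by
          apply Finset.sum_le_sum
          intro j hj
          apply mul_le_mul_of_nonneg_right _ (bb_nonneg hp.1 hp.2)
          exact Hstep c N Λ hΛ (Nat.lt_succ_iff.mp (Finset.mem_range.mp hj))
      _ = Λ + EE c N := by
          rw [← Finset.mul_sum, bb_sum, mul_one]
  have hlip := Convex.norm_image_sub_le_of_norm_hasDerivWithin_le
    (f := fun p => ∑ k ∈ range (N+2), psi1 c N k * bb (N+1) k p)
    (f' := fun p => ((N:ℝ)+1) * ∑ j ∈ range (N+1), (psi1 c N (j+1) - psi1 c N j) * bb N j p)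
    (fun p _ => (hasDerivAt_bbsum N (psi1 c N) p).hasDerivWithinAt) hG'
    (convex_Icc _ _) (qq_mem c N i) (qq_mem c N (i+1))
  simpa [Real.norm_eq_abs, Gf] using hlip


noncomputable def Tv (c : ℝ) (N : ℕ) (a : ℕ → ℝ) (j : ℕ) : ℝ :=
  ∑ i ∈ range (N+2), a i * bb (N+1) j (qq c N i)
noncomputable def cdfv (a : ℕ → ℝ) (k : ℕ) : ℝ := ∑ j ∈ range (k+1), a j
noncomputable def Av (c : ℝ) (N : ℕ) (a : ℕ → ℝ) : ℝ :=
  ∑ k ∈ range (N+1), |cdfv a k| * |qq c N (k+1) - qq c N k|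
noncomputable def Kpsi (c : ℝ) (N : ℕ) (ψ : ℕ → ℝ) (i : ℕ) : ℝ :=
  ∑ j ∈ range (N+2), ψ j * bb (N+1) j (qq c N i)

lemma abel_sum (a g : ℕ → ℝ) (m : ℕ) :
    ∑ j ∈ range (m+1), a j * g j
      = (∑ i ∈ range m, (cdfv a i) * (g i - g (i+1))) + (cdfv a m) * g m := by
  induction m with
  | zero => simp [cdfv]
  | succ m ih =>
    rw [Finset.sum_range_succ (fun j => a j * g j), ih, Finset.sum_range_succ
      (fun i => cdfv a i * (g i - g (i+1)))]
    have hc : cdfv a (m+1) = cdfv a m + a (m+1) := by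
      unfold cdfv
      rw [Finset.sum_range_succ]
    rw [hc]
    ring

lemma cdfv_Tv (c : ℝ) (N : ℕ) (a : ℕ → ℝ) (k : ℕ) :
    cdfv (Tv c N a) k = ∑ i ∈ range (N+2), a i * (∑ j ∈ range (k+1), bb (N+1) j (qq c N i)) := by
  unfold cdfv Tv
  rw [Finset.sum_comm]
  apply Finset.sum_congr rfl
  intro i _
  rw [Finset.mul_sum]

lemma master (c : ℝ) (N : ℕ) (a : ℕ → ℝ) (ha0 : ∑ j ∈ range (N+2), a j = 0)
    (ψ : ℕ → ℝ) (ε : ℝ) (hε : ε = 1 ∨ ε = -1) (hψ : ∀ k, 0 ≤ ε * (ψ (k+1) - ψ k)) :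
    ∑ k ∈ range (N+1), |cdfv (Tv c N a) k| * |ψ (k+1) - ψ k|
      ≤ ∑ i ∈ range (N+1), |cdfv a i| * |Kpsi c N ψ (i+1) - Kpsi c N ψ i| := by
  -- notation
  set Fb : ℕ → ℕ → ℝ := fun i k => ∑ j ∈ range (k+1), bb (N+1) j (qq c N i) with hFb
  have habs : ∀ ε', ε' = 1 ∨ ε' = -1 → ∀ x : ℝ, 0 ≤ ε' * x → |x| = ε' * x := by
    intro ε' hε' x hx
    rcases hε' with h | h <;> subst h
    · rw [abs_of_nonneg (by linarith), one_mul]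
    · rw [abs_of_nonpos (by nlinarith), neg_one_mul]
  -- step (b): representation of cdfv (Tv a)
  have hrep : ∀ k, cdfv (Tv c N a) k
      = ∑ i ∈ range (N+1), cdfv a i * (Fb i k - Fb (i+1) k) := by
    intro k
    rw [cdfv_Tv]
    have := abel_sum a (fun i => Fb i k) (N+1)
    have hz : cdfv a (N+1) = 0 := ha0
    rw [hz, zero_mul, add_zero] at this
    exact this
  -- step (d): key identity per i
  have hkey : ∀ i, ∑ k ∈ range (N+1), |ψ (k+1) - ψ k| * |Fb i k - Fb (i+1) k|
      ≤ |Kpsi c N ψ (i+1) - Kpsi c N ψ i| := by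
    intro i
    -- sign of the CDF differences
    have hsign : (∀ k ∈ range (N+1), Fb (i+1) k ≤ Fb i k) ∨
        (∀ k ∈ range (N+1), Fb i k ≤ Fb (i+1) k) := by
      rcases le_total (qq c N i) (qq c N (i+1)) with h | h
      · left
        intro k hk
        exact cdf_antitone N k (Nat.lt_succ_iff.mp (Finset.mem_range.mp hk))
          (qq_mem c N i) (qq_mem c N (i+1)) h
      · right
        intro k hk
        exact cdf_antitone N k (Nat.lt_succ_iff.mp (Finset.mem_range.mp hk))
          (qq_mem c N (i+1)) (qq_mem c N i) h
    -- abel backwards: ∑_k Δψ k * (Fb i k - Fb (i+1) k) = Kψ(i+1) - Kψ(i) ... (up to sign)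
    have hT : ∑ k ∈ range (N+1), (ψ (k+1) - ψ k) * (Fb i k - Fb (i+1) k)
        = Kpsi c N ψ (i+1) - Kpsi c N ψ i := by
      have h1 := abel_sum (fun j => bb (N+1) j (qq c N i) - bb (N+1) j (qq c N (i+1))) ψ (N+1)
      have hcd : ∀ k, cdfv (fun j => bb (N+1) j (qq c N i) - bb (N+1) j (qq c N (i+1))) k
          = Fb i k - Fb (i+1) k := by
        intro k
        unfold cdfv
        rw [Finset.sum_sub_distrib]
      have hz : Fb i (N+1) - Fb (i+1) (N+1) = 0 := by
        simp only [hFb]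
        rw [bb_sum, bb_sum]
        ring
      have hL : ∑ j ∈ range (N+2), (bb (N+1) j (qq c N i) - bb (N+1) j (qq c N (i+1))) * ψ j
          = Kpsi c N ψ i - Kpsi c N ψ (i+1) := by
        unfold Kpsi
        rw [← Finset.sum_sub_distrib]
        apply Finset.sum_congr rfl
        intro j _
        ring
      rw [hL] at h1
      simp only [hcd] at h1
      rw [hz, zero_mul, add_zero] at h1
      have : ∑ i_1 ∈ range (N+1), (Fb i i_1 - Fb (i+1) i_1) * (ψ i_1 - ψ (i_1+1))
          = -∑ k ∈ range (N+1), (ψ (k+1) - ψ k) * (Fb i k - Fb (i+1) k) := by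
        rw [← Finset.sum_neg_distrib]
        apply Finset.sum_congr rfl
        intro k _
        ring
      rw [this] at h1
      linarith
    rcases hsign with hs | hs
    · -- Fb i k - Fb (i+1) k ≥ 0
      have he : ∀ k ∈ range (N+1), |ψ (k+1) - ψ k| * |Fb i k - Fb (i+1) k|
          = ε * ((ψ (k+1) - ψ k) * (Fb i k - Fb (i+1) k)) := by
        intro k hk
        rw [habs ε hε _ (hψ k), abs_of_nonneg (by linarith [hs k hk])]
        ring
      rw [Finset.sum_congr rfl he, ← Finset.mul_sum, hT]
      rcases hε with h | h <;> subst h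
      · rw [one_mul]; exact le_abs_self _
      · rw [neg_one_mul]; exact neg_le_abs _
    · have he : ∀ k ∈ range (N+1), |ψ (k+1) - ψ k| * |Fb i k - Fb (i+1) k|
          = -(ε * ((ψ (k+1) - ψ k) * (Fb i k - Fb (i+1) k))) := by
        intro k hk
        rw [habs ε hε _ (hψ k), abs_of_nonpos (by linarith [hs k hk])]
        ring
      rw [Finset.sum_congr rfl he, Finset.sum_neg_distrib, ← Finset.mul_sum, hT]
      rcases hε with h | h <;> subst h
      · rw [one_mul]; exact neg_le_abs _
      · rw [neg_one_mul, neg_neg]; exact le_abs_self _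
  calc ∑ k ∈ range (N+1), |cdfv (Tv c N a) k| * |ψ (k+1) - ψ k|
      ≤ ∑ k ∈ range (N+1), (∑ i ∈ range (N+1), |cdfv a i| * |Fb i k - Fb (i+1) k|)
          * |ψ (k+1) - ψ k| := by
        apply Finset.sum_le_sum
        intro k _
        apply mul_le_mul_of_nonneg_right _ (abs_nonneg _)
        rw [hrep k]
        calc |∑ i ∈ range (N+1), cdfv a i * (Fb i k - Fb (i+1) k)|
            ≤ ∑ i ∈ range (N+1), |cdfv a i * (Fb i k - Fb (i+1) k)| :=
              Finset.abs_sum_le_sum_abs _ _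
          _ = ∑ i ∈ range (N+1), |cdfv a i| * |Fb i k - Fb (i+1) k| := by
              apply Finset.sum_congr rfl
              intro i _
              rw [abs_mul]
    _ = ∑ k ∈ range (N+1), ∑ i ∈ range (N+1),
          |cdfv a i| * (|ψ (k+1) - ψ k| * |Fb i k - Fb (i+1) k|) := by
        apply Finset.sum_congr rfl
        intro k _
        rw [Finset.sum_mul]
        apply Finset.sum_congr rfl
        intro i _
        ring
    _ = ∑ i ∈ range (N+1), ∑ k ∈ range (N+1),
          |cdfv a i| * (|ψ (k+1) - ψ k| * |Fb i k - Fb (i+1) k|) := Finset.sum_comm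
    _ = ∑ i ∈ range (N+1), |cdfv a i| *
          (∑ k ∈ range (N+1), |ψ (k+1) - ψ k| * |Fb i k - Fb (i+1) k|) := by
        apply Finset.sum_congr rfl
        intro i _
        rw [← Finset.mul_sum]
    _ ≤ ∑ i ∈ range (N+1), |cdfv a i| * |Kpsi c N ψ (i+1) - Kpsi c N ψ i| := by
        apply Finset.sum_le_sum
        intro i _
        exact mul_le_mul_of_nonneg_left (hkey i) (abs_nonneg _)

lemma swap_w (c : ℝ) (N : ℕ) (a w : ℕ → ℝ) :
    ∑ j ∈ range (N+2), w j * Tv c N a j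
      = ∑ i ∈ range (N+2), a i * (∑ j ∈ range (N+2), w j * bb (N+1) j (qq c N i)) := by
  unfold Tv
  have h1 : ∀ j ∈ range (N+2), w j * ∑ i ∈ range (N+2), a i * bb (N+1) j (qq c N i)
      = ∑ i ∈ range (N+2), a i * (w j * bb (N+1) j (qq c N i)) := by
    intro j _
    rw [Finset.mul_sum]
    exact Finset.sum_congr rfl (fun i _ => by ring)
  rw [Finset.sum_congr rfl h1, Finset.sum_comm]
  exact Finset.sum_congr rfl (fun i _ => by rw [← Finset.mul_sum])

lemma tv_step (c : ℝ) (N : ℕ) (a : ℕ → ℝ) (ha0 : ∑ j ∈ range (N+2), a j = 0)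
    (w : ℕ → ℝ) (hw : ∀ j, w j = 0 ∨ w j = 1) :
    |∑ j ∈ range (N+2), w j * Tv c N a j| ≤ ((N:ℝ)+1) * Av c N a := by
  rw [swap_w]
  have habel := abel_sum a (fun i => ∑ j ∈ range (N+2), w j * bb (N+1) j (qq c N i)) (N+1)
  have hz : cdfv a (N+1) = 0 := ha0
  rw [hz, zero_mul, add_zero] at habel
  rw [habel]
  have hjump : ∀ j, |w (j+1) - w j| ≤ 1 := by
    intro j
    rcases hw (j+1) with h1 | h1 <;> rcases hw j with h2 | h2 <;> rw [h1, h2] <;> norm_num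
  calc |∑ i ∈ range (N+1), cdfv a i * ((∑ j ∈ range (N+2), w j * bb (N+1) j (qq c N i))
          - ∑ j ∈ range (N+2), w j * bb (N+1) j (qq c N (i+1)))|
      ≤ ∑ i ∈ range (N+1), |cdfv a i| * |(∑ j ∈ range (N+2), w j * bb (N+1) j (qq c N i))
          - ∑ j ∈ range (N+2), w j * bb (N+1) j (qq c N (i+1))| := by
        calc _ ≤ ∑ i ∈ range (N+1), |cdfv a i * ((∑ j ∈ range (N+2), w j * bb (N+1) j (qq c N i))
            - ∑ j ∈ range (N+2), w j * bb (N+1) j (qq c N (i+1)))| := Finset.abs_sum_le_sum_abs _ _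
          _ = _ := by
            apply Finset.sum_congr rfl
            intro i _
            rw [abs_mul]
    _ ≤ ∑ i ∈ range (N+1), |cdfv a i| * (((N:ℝ)+1) * |qq c N (i+1) - qq c N i|) := by
        apply Finset.sum_le_sum
        intro i _
        apply mul_le_mul_of_nonneg_left _ (abs_nonneg _)
        have := bbsum_lipschitz N w hjump (qq_mem c N i) (qq_mem c N (i+1))
        rw [abs_sub_comm (qq c N (i+1))]
        exact this
    _ = ((N:ℝ)+1) * Av c N a := by
        unfold Av
        rw [Finset.mul_sum]
        apply Finset.sum_congr rfl
        intro i _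
        ring

lemma tv_dp (c : ℝ) (N : ℕ) (a : ℕ → ℝ) (ha0 : ∑ j ∈ range (N+2), a j = 0)
    (w : ℕ → ℝ) (hw : ∀ j, w j = 0 ∨ w j = 1) :
    |∑ j ∈ range (N+2), w j * Tv c N a j| ≤ ∑ j ∈ range (N+2), max (a j) 0 := by
  rw [swap_w]
  have hP : ∀ i, 0 ≤ (∑ j ∈ range (N+2), w j * bb (N+1) j (qq c N i)) ∧
      (∑ j ∈ range (N+2), w j * bb (N+1) j (qq c N i)) ≤ 1 := by
    intro i
    have hmem := qq_mem c N i
    constructor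
    · apply Finset.sum_nonneg
      intro j _
      rcases hw j with h | h <;> rw [h]
      · simp
      · rw [one_mul]; exact bb_nonneg hmem.1 hmem.2
    · calc ∑ j ∈ range (N+2), w j * bb (N+1) j (qq c N i)
          ≤ ∑ j ∈ range (N+2), bb (N+1) j (qq c N i) := by
            apply Finset.sum_le_sum
            intro j _
            rcases hw j with h | h <;> rw [h]
            · simp [bb_nonneg hmem.1 hmem.2]
            · rw [one_mul]
        _ = 1 := bb_sum (N+1) (qq c N i)
  rw [abs_le]
  constructor
  · have h1 : ∀ i ∈ range (N+2), (min (a i) 0 : ℝ)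
        ≤ a i * (∑ j ∈ range (N+2), w j * bb (N+1) j (qq c N i)) := by
      intro i _
      rcases le_or_gt 0 (a i) with h | h
      · have := mul_nonneg h (hP i).1
        have : min (a i) 0 ≤ 0 := min_le_right _ _
        nlinarith [(hP i).1, (hP i).2, mul_nonneg h (hP i).1]
      · have : a i * (∑ j ∈ range (N+2), w j * bb (N+1) j (qq c N i)) ≥ a i * 1 := by
          apply mul_le_mul_of_nonpos_left (hP i).2 (le_of_lt h)
        have hmin : min (a i) 0 = a i := min_eq_left (le_of_lt h)
        nlinarith
    have h2 : ∑ i ∈ range (N+2), min (a i) 0 = -∑ i ∈ range (N+2), max (a i) 0 := by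
      have : ∀ i ∈ range (N+2), min (a i) 0 = a i - max (a i) 0 := by
        intro i _
        rcases le_or_gt 0 (a i) with h | h
        · rw [min_eq_right h, max_eq_left h]; ring
        · rw [min_eq_left (le_of_lt h), max_eq_right (le_of_lt h)]; ring
      rw [Finset.sum_congr rfl this, Finset.sum_sub_distrib, ha0]
      ring
    have := Finset.sum_le_sum h1
    rw [h2] at this
    linarith
  · apply Finset.sum_le_sum
    intro i _
    rcases le_or_gt 0 (a i) with h | h
    · have h1 : a i * (∑ j ∈ range (N+2), w j * bb (N+1) j (qq c N i)) ≤ a i * 1 :=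
        mul_le_mul_of_nonneg_left (hP i).2 h
      rw [max_eq_left h]
      linarith
    · have h1 : a i * (∑ j ∈ range (N+2), w j * bb (N+1) j (qq c N i)) ≤ 0 :=
        mul_nonpos_of_nonpos_of_nonneg (le_of_lt h) (hP i).1
      rw [max_eq_right (le_of_lt h)]
      exact h1


lemma qq_eq (c : ℝ) (N : ℕ) (j : ℕ) : qq c N j = _root_.sigmoid (c * (j:ℝ) / ((N+1 : ℕ):ℝ)) := by
  unfold qq
  congr 1
  push_cast
  ring

lemma ker_eq_bb (c : ℝ) (N : ℕ) (i j : Fin (N+1+1)) :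
    Ker c (N+1) i j = bb (N+1) (j:ℕ) (qq c N (i:ℕ)) := by
  rw [qq_eq]
  rfl

lemma ker_rowsum (c : ℝ) (N : ℕ) (i : Fin (N+1+1)) :
    ∑ j : Fin (N+1+1), Ker c (N+1) i j = 1 := by
  have h : ∑ j : Fin (N+1+1), Ker c (N+1) i j
      = ∑ j ∈ range (N+2), bb (N+1) j (qq c N (i:ℕ)) := by
    rw [← Fin.sum_univ_eq_sum_range (fun j => bb (N+1) j (qq c N (i:ℕ))) (N+2)]
    apply Finset.sum_congr rfl
    intro j _
    exact ker_eq_bb c N i j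
  rw [h]
  exact bb_sum (N+1) _

lemma ker_nonneg (c : ℝ) (N : ℕ) (i j : Fin (N+1+1)) : 0 ≤ Ker c (N+1) i j := by
  rw [ker_eq_bb]
  have := _root_.sigmoid_pos (c * ((i:ℕ):ℝ)/((N:ℝ)+1))
  exact bb_nonneg (le_of_lt (_root_.sigmoid_pos _)) (le_of_lt (_root_.sigmoid_lt_one _))

lemma kerPow_nonneg (c : ℝ) (N : ℕ) (t : ℕ) (x j : Fin (N+1+1)) :
    0 ≤ KerPow c (N+1) t x j := by
  induction t generalizing j with
  | zero => unfold KerPow; split <;> norm_num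
  | succ t ih =>
    show 0 ≤ ∑ k, KerPow c (N+1) t x k * Ker c (N+1) k j
    apply Finset.sum_nonneg
    intro k _
    exact mul_nonneg (ih k) (ker_nonneg c N k j)

lemma kerPow_rowsum (c : ℝ) (N : ℕ) (t : ℕ) (x : Fin (N+1+1)) :
    ∑ j : Fin (N+1+1), KerPow c (N+1) t x j = 1 := by
  induction t with
  | zero =>
    show ∑ j : Fin (N+1+1), (if x = j then (1:ℝ) else 0) = 1
    simp
  | succ t ih =>
    show ∑ j : Fin (N+1+1), ∑ k, KerPow c (N+1) t x k * Ker c (N+1) k j = 1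
    rw [Finset.sum_comm]
    have : ∀ k ∈ Finset.univ (α := Fin (N+1+1)), ∑ j : Fin (N+1+1), KerPow c (N+1) t x k * Ker c (N+1) k j
        = KerPow c (N+1) t x k := by
      intro k _
      rw [← Finset.mul_sum, ker_rowsum, mul_one]
    rw [Finset.sum_congr rfl this, ih]

lemma piWeight_pos (c : ℝ) (n : ℕ) (j : Fin (n+1)) : 0 < piWeight c n j := by
  unfold piWeight
  have h1 : 0 < (n.choose (j:ℕ) : ℝ) := by
    have := Nat.choose_pos (Nat.lt_succ_iff.mp j.isLt)
    exact_mod_cast this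
  have h2 := one_add_exp_pos (c * (j:ℕ) / n)
  positivity

lemma piZ_pos (c : ℝ) (n : ℕ) : 0 < ∑ k : Fin (n+1), piWeight c n k := by
  apply Finset.sum_pos (fun k _ => piWeight_pos c n k) ⟨⟨0, Nat.succ_pos n⟩, Finset.mem_univ _⟩

lemma piDist_nonneg (c : ℝ) (n : ℕ) (j : Fin (n+1)) : 0 ≤ piDist c n j :=
  le_of_lt (div_pos (piWeight_pos c n j) (piZ_pos c n))

lemma piDist_sum (c : ℝ) (n : ℕ) : ∑ j : Fin (n+1), piDist c n j = 1 := by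
  unfold piDist
  rw [← Finset.sum_div]
  exact div_self (ne_of_gt (piZ_pos c n))

lemma pi_stationary_weight (c : ℝ) (n : ℕ) (hn : 0 < n) (j : Fin (n+1)) :
    ∑ i : Fin (n+1), piWeight c n i * Ker c n i j = piWeight c n j := by
  have hterm : ∀ i : Fin (n+1), piWeight c n i * Ker c n i j
      = (n.choose (i:ℕ) : ℝ) * (n.choose (j:ℕ) : ℝ) * (Real.exp (c * (j:ℕ) / n)) ^ (i:ℕ) := by
    intro i
    unfold piWeight Ker
    set a := c * ((i:ℕ):ℝ) / n with ha
    have hexp : Real.exp a ^ (j:ℕ) = Real.exp (c * ((j:ℕ):ℝ) / n) ^ (i:ℕ) := by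
      rw [← Real.exp_nat_mul, ← Real.exp_nat_mul]
      congr 1
      rw [ha]
      ring
    have hsig : _root_.sigmoid a ^ (j:ℕ) * (1 - _root_.sigmoid a) ^ (n - (j:ℕ))
        = Real.exp a ^ (j:ℕ) / (1 + Real.exp a) ^ n := by
      rw [one_sub_sigmoid]
      unfold _root_.sigmoid
      rw [div_pow, div_pow, one_pow, div_mul_div_comm, ← pow_add,
        Nat.add_sub_cancel' (Nat.lt_succ_iff.mp j.isLt)]
      ring
    calc (n.choose (i:ℕ) : ℝ) * (1 + Real.exp a)^n
          * ((n.choose (j:ℕ) : ℝ) * _root_.sigmoid a ^ (j:ℕ) * (1 - _root_.sigmoid a) ^ (n - (j:ℕ)))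
        = (n.choose (i:ℕ) : ℝ) * (n.choose (j:ℕ) : ℝ)
          * ((1 + Real.exp a)^n * (_root_.sigmoid a ^ (j:ℕ) * (1 - _root_.sigmoid a) ^ (n - (j:ℕ)))) := by ring
      _ = (n.choose (i:ℕ) : ℝ) * (n.choose (j:ℕ) : ℝ)
          * ((1 + Real.exp a)^n * (Real.exp a ^ (j:ℕ) / (1 + Real.exp a) ^ n)) := by rw [hsig]
      _ = (n.choose (i:ℕ) : ℝ) * (n.choose (j:ℕ) : ℝ) * Real.exp a ^ (j:ℕ) := by
          have hne : ((1:ℝ) + Real.exp a)^n ≠ 0 := by positivity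
          field_simp
      _ = (n.choose (i:ℕ) : ℝ) * (n.choose (j:ℕ) : ℝ) * (Real.exp (c * (j:ℕ) / n)) ^ (i:ℕ) := by
          rw [hexp]
  rw [Finset.sum_congr rfl (fun i _ => hterm i)]
  have hbin : ∑ i : Fin (n+1), (n.choose (i:ℕ) : ℝ) * (Real.exp (c * (j:ℕ) / n)) ^ (i:ℕ)
      = (1 + Real.exp (c * (j:ℕ) / n)) ^ n := by
    rw [Fin.sum_univ_eq_sum_range (fun i => (n.choose i : ℝ) * (Real.exp (c * (j:ℕ) / n)) ^ i) (n+1)]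
    have h := add_pow (Real.exp (c * ((j:ℕ):ℝ) / n)) 1 n
    simp only [one_pow, mul_one] at h
    rw [show (1:ℝ) + Real.exp (c * (j:ℕ) / n) = Real.exp (c * (j:ℕ) / n) + 1 from by ring, h]
    apply Finset.sum_congr rfl
    intro i _
    ring
  calc ∑ i : Fin (n+1), (n.choose (i:ℕ) : ℝ) * (n.choose (j:ℕ) : ℝ) * (Real.exp (c * (j:ℕ) / n)) ^ (i:ℕ)
      = (n.choose (j:ℕ) : ℝ) * ∑ i : Fin (n+1), (n.choose (i:ℕ) : ℝ) * (Real.exp (c * (j:ℕ) / n)) ^ (i:ℕ) := by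
        rw [Finset.mul_sum]
        apply Finset.sum_congr rfl
        intro i _
        ring
    _ = (n.choose (j:ℕ) : ℝ) * (1 + Real.exp (c * (j:ℕ) / n)) ^ n := by rw [hbin]
    _ = piWeight c n j := rfl

lemma pi_stationary (c : ℝ) (n : ℕ) (hn : 0 < n) (j : Fin (n+1)) :
    ∑ i : Fin (n+1), piDist c n i * Ker c n i j = piDist c n j := by
  unfold piDist
  have h : ∑ i : Fin (n+1), (piWeight c n i / ∑ k : Fin (n+1), piWeight c n k) * Ker c n i j
      = (∑ i : Fin (n+1), piWeight c n i * Ker c n i j) / ∑ k : Fin (n+1), piWeight c n k := by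
    rw [Finset.sum_div]
    apply Finset.sum_congr rfl
    intro i _
    ring
  rw [h, pi_stationary_weight c n hn j]

lemma pi_kerPow (c : ℝ) (n : ℕ) (hn : 0 < n) (t : ℕ) (j : Fin (n+1)) :
    ∑ i : Fin (n+1), piDist c n i * KerPow c n t i j = piDist c n j := by
  induction t generalizing j with
  | zero =>
    show ∑ i : Fin (n+1), piDist c n i * (if i = j then (1:ℝ) else 0) = piDist c n j
    rw [Finset.sum_eq_single j]
    · simp
    · intro i _ hij
      simp [hij]
    · intro h
      exact absurd (Finset.mem_univ j) h
  | succ t ih =>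
    show ∑ i : Fin (n+1), piDist c n i * (∑ k, KerPow c n t i k * Ker c n k j) = piDist c n j
    have hswap : ∑ i : Fin (n+1), piDist c n i * (∑ k, KerPow c n t i k * Ker c n k j)
        = ∑ k : Fin (n+1), (∑ i : Fin (n+1), piDist c n i * KerPow c n t i k) * Ker c n k j := by
      calc ∑ i : Fin (n+1), piDist c n i * (∑ k, KerPow c n t i k * Ker c n k j)
          = ∑ i : Fin (n+1), ∑ k, piDist c n i * (KerPow c n t i k * Ker c n k j) := by
            apply Finset.sum_congr rfl
            intro i _
            rw [Finset.mul_sum]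
        _ = ∑ k : Fin (n+1), ∑ i, piDist c n i * (KerPow c n t i k * Ker c n k j) :=
            Finset.sum_comm
        _ = ∑ k : Fin (n+1), (∑ i : Fin (n+1), piDist c n i * KerPow c n t i k) * Ker c n k j := by
            apply Finset.sum_congr rfl
            intro k _
            rw [Finset.sum_mul]
            apply Finset.sum_congr rfl
            intro i _
            ring
    rw [hswap]
    rw [Finset.sum_congr rfl (fun k _ => by rw [ih k])]
    exact pi_stationary c n hn j


noncomputable def av (c : ℝ) (N : ℕ) (x y : Fin (N+2)) (t : ℕ) (j : ℕ) : ℝ :=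
  if h : j < N+2 then (KerPow c (N+1) t x ⟨j,h⟩ - KerPow c (N+1) t y ⟨j,h⟩) else 0

lemma av_succ (c : ℝ) (N : ℕ) (x y : Fin (N+2)) (t : ℕ) :
    av c N x y (t+1) = Tv c N (av c N x y t) := by
  funext j
  unfold av Tv
  by_cases hj : j < N+2
  · rw [dif_pos hj]
    show (∑ k, KerPow c (N+1) t x k * Ker c (N+1) k ⟨j,hj⟩)
        - (∑ k, KerPow c (N+1) t y k * Ker c (N+1) k ⟨j,hj⟩) = _
    rw [← Finset.sum_sub_distrib]
    have hfin : ∀ k : Fin (N+2), KerPow c (N+1) t x k * Ker c (N+1) k ⟨j,hj⟩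
        - KerPow c (N+1) t y k * Ker c (N+1) k ⟨j,hj⟩
        = (KerPow c (N+1) t x k - KerPow c (N+1) t y k) * bb (N+1) j (qq c N (k:ℕ)) := by
      intro k
      rw [ker_eq_bb]
      ring
    rw [Finset.sum_congr rfl (fun k _ => hfin k)]
    rw [← Fin.sum_univ_eq_sum_range (fun i => (if h : i < N+2 then
        (KerPow c (N+1) t x ⟨i,h⟩ - KerPow c (N+1) t y ⟨i,h⟩) else 0)
        * bb (N+1) j (qq c N i)) (N+2)]
    apply Finset.sum_congr rfl
    intro k _
    congr 1
    rw [dif_pos k.isLt]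
  · rw [dif_neg hj]
    have hbb : ∀ i : ℕ, bb (N+1) j (qq c N i) = 0 := by
      intro i
      unfold bb
      rw [Nat.choose_eq_zero_of_lt (by omega)]
      norm_num
    rw [eq_comm]
    apply Finset.sum_eq_zero
    intro i _
    rw [hbb i, mul_zero]

lemma av_sum_zero (c : ℝ) (N : ℕ) (x y : Fin (N+2)) (t : ℕ) :
    ∑ j ∈ range (N+2), av c N x y t j = 0 := by
  rw [← Fin.sum_univ_eq_sum_range (av c N x y t) (N+2)]
  have h : ∀ k : Fin (N+2), av c N x y t (k:ℕ)
      = KerPow c (N+1) t x k - KerPow c (N+1) t y k := by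
    intro k
    unfold av
    rw [dif_pos k.isLt]
  rw [Finset.sum_congr rfl (fun k _ => h k), Finset.sum_sub_distrib,
    kerPow_rowsum, kerPow_rowsum]
  ring

lemma av_cdf0 (c : ℝ) (N : ℕ) (x y : Fin (N+2)) (k : ℕ) :
    |cdfv (av c N x y 0) k| ≤ 1 := by
  have hS : ∀ z : Fin (N+2), ∑ j ∈ range (k+1),
      (if h : j < N+2 then (if z = ⟨j,h⟩ then (1:ℝ) else 0) else 0)
      = if (z:ℕ) ≤ k then 1 else 0 := by
    intro z
    by_cases hz : (z:ℕ) ≤ k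
    · rw [if_pos hz]
      rw [Finset.sum_eq_single_of_mem (z:ℕ) (Finset.mem_range.mpr (by omega))]
      · rw [dif_pos z.isLt, if_pos (by exact (Fin.eta z z.isLt).symm)]
      · intro j _ hjz
        by_cases hj : j < N+2
        · rw [dif_pos hj, if_neg]
          intro hcon
          exact hjz (by rw [hcon])
        · rw [dif_neg hj]
    · rw [if_neg hz]
      apply Finset.sum_eq_zero
      intro j hj
      have hjk : j ≤ k := Nat.lt_succ_iff.mp (Finset.mem_range.mp hj)
      by_cases hjN : j < N+2
      · rw [dif_pos hjN, if_neg]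
        intro hcon
        rw [hcon] at hz
        exact hz hjk
      · rw [dif_neg hjN]
  have hsplit : cdfv (av c N x y 0) k
      = (∑ j ∈ range (k+1), (if h : j < N+2 then (if x = ⟨j,h⟩ then (1:ℝ) else 0) else 0))
        - (∑ j ∈ range (k+1), (if h : j < N+2 then (if y = ⟨j,h⟩ then (1:ℝ) else 0) else 0)) := by
    unfold cdfv av
    rw [← Finset.sum_sub_distrib]
    apply Finset.sum_congr rfl
    intro j _
    by_cases hj : j < N+2
    · rw [dif_pos hj, dif_pos hj, dif_pos hj]
      rfl
    · rw [dif_neg hj, dif_neg hj, dif_neg hj]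
      ring
  rw [hsplit, hS x, hS y]
  split_ifs <;> norm_num

lemma Av_nonneg (c : ℝ) (N : ℕ) (a : ℕ → ℝ) : 0 ≤ Av c N a := by
  apply Finset.sum_nonneg
  intro k _
  exact mul_nonneg (abs_nonneg _) (abs_nonneg _)

lemma qq_telescope (c : ℝ) (N : ℕ) :
    ∑ k ∈ range (N+1), |qq c N (k+1) - qq c N k| ≤ 1 := by
  rcases le_or_gt 0 c with hc | hc
  · have h : ∀ k ∈ range (N+1), |qq c N (k+1) - qq c N k| = qq c N (k+1) - qq c N k := by
      intro k _
      exact abs_of_nonneg (by linarith [qq_mono_of_nonneg c hc N k])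
    rw [Finset.sum_congr rfl h, Finset.sum_range_sub (qq c N)]
    have h1 := qq_mem c N (N+1)
    have h2 := qq_mem c N 0
    have := h1.2
    have := h2.1
    linarith
  · have h : ∀ k ∈ range (N+1), |qq c N (k+1) - qq c N k| = qq c N k - qq c N (k+1) := by
      intro k _
      rw [abs_of_nonpos (show qq c N (k+1) - qq c N k ≤ 0 from by
        linarith [qq_anti_of_nonpos c (le_of_lt hc) N k])]
      ring
    rw [Finset.sum_congr rfl h, Finset.sum_range_sub' (qq c N)]
    have h1 := qq_mem c N (N+1)
    have h2 := qq_mem c N 0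
    have := h1.1
    have := h2.2
    linarith

lemma Av0_le_one (c : ℝ) (N : ℕ) (x y : Fin (N+2)) : Av c N (av c N x y 0) ≤ 1 := by
  unfold Av
  calc ∑ k ∈ range (N+1), |cdfv (av c N x y 0) k| * |qq c N (k+1) - qq c N k|
      ≤ ∑ k ∈ range (N+1), 1 * |qq c N (k+1) - qq c N k| := by
        apply Finset.sum_le_sum
        intro k _
        exact mul_le_mul_of_nonneg_right (av_cdf0 c N x y k) (abs_nonneg _)
    _ = ∑ k ∈ range (N+1), |qq c N (k+1) - qq c N k| := by
        apply Finset.sum_congr rfl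
        intro k _
        ring
    _ ≤ 1 := qq_telescope c N

lemma Av_even (c : ℝ) (N : ℕ) (Λ lam : ℝ) (hΛ0 : 0 ≤ Λ)
    (hΛpt : ∀ z : ℝ, 0 ≤ z → z ≤ 1 →
      |c * sigd (c * _root_.sigmoid (c*z))| * |c * sigd (c*z)| ≤ Λ)
    (hlam : Λ + EE c N ≤ lam) (hlam0 : 0 ≤ lam)
    (x y : Fin (N+2)) : ∀ m : ℕ, Av c N (av c N x y (2*m)) ≤ lam ^ m := by
  intro m
  induction m with
  | zero => simpa using Av0_le_one c N x y
  | succ m ih =>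
    have hstep : Av c N (av c N x y (2*m+2)) ≤ lam * Av c N (av c N x y (2*m)) := by
      have h1 : Av c N (av c N x y (2*m+2))
          ≤ ∑ i ∈ range (N+1), |cdfv (av c N x y (2*m+1)) i| * |psi1 c N (i+1) - psi1 c N i| := by
        unfold Av
        rw [show (2*m+2) = (2*m+1)+1 from rfl, av_succ]
        have hε : ∃ ε : ℝ, (ε = 1 ∨ ε = -1) ∧ ∀ k, 0 ≤ ε * (qq c N (k+1) - qq c N k) := by
          rcases le_or_gt 0 c with hcs | hcs
          · exact ⟨1, Or.inl rfl, fun k => by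
              rw [one_mul]; linarith [qq_mono_of_nonneg c hcs N k]⟩
          · exact ⟨-1, Or.inr rfl, fun k => by
              rw [neg_one_mul]; linarith [qq_anti_of_nonpos c (le_of_lt hcs) N k]⟩
        obtain ⟨ε, hε1, hε2⟩ := hε
        have := master c N (av c N x y (2*m+1)) (av_sum_zero c N x y (2*m+1))
          (qq c N) ε hε1 hε2
        convert this using 2
        rfl
      have h2 : ∑ i ∈ range (N+1), |cdfv (av c N x y (2*m+1)) i| * |psi1 c N (i+1) - psi1 c N i|
          ≤ ∑ i ∈ range (N+1), |cdfv (av c N x y (2*m)) i|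
            * |Gf c N (qq c N (i+1)) - Gf c N (qq c N i)| := by
        rw [show (2*m+1) = (2*m)+1 from rfl, av_succ]
        have := master c N (av c N x y (2*m)) (av_sum_zero c N x y (2*m))
          (psi1 c N) 1 (Or.inl rfl) (fun k => by rw [one_mul]; linarith [psi1_mono c N k])
        convert this using 2
        rfl
      have h3 : ∑ i ∈ range (N+1), |cdfv (av c N x y (2*m)) i|
            * |Gf c N (qq c N (i+1)) - Gf c N (qq c N i)|
          ≤ lam * Av c N (av c N x y (2*m)) := by
        unfold Av
        rw [Finset.mul_sum]
        apply Finset.sum_le_sum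
        intro i _
        calc |cdfv (av c N x y (2*m)) i| * |Gf c N (qq c N (i+1)) - Gf c N (qq c N i)|
            ≤ |cdfv (av c N x y (2*m)) i| * ((Λ + EE c N) * |qq c N (i+1) - qq c N i|) :=
              mul_le_mul_of_nonneg_left (twostep c N Λ hΛ0 hΛpt i) (abs_nonneg _)
          _ ≤ |cdfv (av c N x y (2*m)) i| * (lam * |qq c N (i+1) - qq c N i|) := by
              apply mul_le_mul_of_nonneg_left _ (abs_nonneg _)
              exact mul_le_mul_of_nonneg_right hlam (abs_nonneg _)
          _ = lam * (|cdfv (av c N x y (2*m)) i| * |qq c N (i+1) - qq c N i|) := by ring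
      linarith
    calc Av c N (av c N x y (2*(m+1))) = Av c N (av c N x y (2*m+2)) := by ring_nf
      _ ≤ lam * Av c N (av c N x y (2*m)) := hstep
      _ ≤ lam * lam ^ m := mul_le_mul_of_nonneg_left ih hlam0
      _ = lam ^ (m+1) := by rw [pow_succ]; ring

lemma pair_w_bound (c : ℝ) (N : ℕ) (Λ lam : ℝ) (hΛ0 : 0 ≤ Λ)
    (hΛpt : ∀ z : ℝ, 0 ≤ z → z ≤ 1 →
      |c * sigd (c * _root_.sigmoid (c*z))| * |c * sigd (c*z)| ≤ Λ)
    (hlam : Λ + EE c N ≤ lam) (hlam0 : 0 ≤ lam)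
    (x y : Fin (N+2)) (t : ℕ) (ht : 1 ≤ t) (w : ℕ → ℝ) (hw : ∀ j, w j = 0 ∨ w j = 1) :
    |∑ j ∈ range (N+2), w j * av c N x y t j| ≤ ((N:ℝ)+1) * lam ^ ((t-1)/2) := by
  have hAv := Av_even c N Λ lam hΛ0 hΛpt hlam hlam0 x y
  have hodd : ∀ m, ∀ w' : ℕ → ℝ, (∀ j, w' j = 0 ∨ w' j = 1) →
      |∑ j ∈ range (N+2), w' j * av c N x y (2*m+1) j| ≤ ((N:ℝ)+1) * lam ^ m := by
    intro m w' hw'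
    rw [show (2*m+1) = (2*m)+1 from rfl, av_succ]
    calc |∑ j ∈ range (N+2), w' j * Tv c N (av c N x y (2*m)) j|
        ≤ ((N:ℝ)+1) * Av c N (av c N x y (2*m)) :=
          tv_step c N _ (av_sum_zero c N x y (2*m)) w' hw'
      _ ≤ ((N:ℝ)+1) * lam ^ m := mul_le_mul_of_nonneg_left (hAv m) (by positivity)
  rcases (show t = 2*((t-1)/2)+1 ∨ t = 2*((t-1)/2)+2 from by omega) with ht2 | ht2
  · rw [ht2, show (2*((t-1)/2)+1-1)/2 = (t-1)/2 from by omega]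
    exact hodd ((t-1)/2) w hw
  · rw [ht2, show (2*((t-1)/2)+2-1)/2 = (t-1)/2 from by omega]
    set m := (t-1)/2 with hm
    -- even case: use data processing
    rw [show (2*m+2) = (2*m+1)+1 from rfl, av_succ]
    have hdp := tv_dp c N _ (av_sum_zero c N x y (2*m+1)) w hw
    obtain ⟨wstar, hws⟩ : ∃ w' : ℕ → ℝ,
        w' = fun j => if 0 < av c N x y (2*m+1) j then 1 else 0 := ⟨_, rfl⟩
    have hwstar : ∀ j, wstar j = 0 ∨ wstar j = 1 := by
      intro j
      simp only [hws]
      split_ifs <;> simp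
    have hmaxeq : ∑ j ∈ range (N+2), max (av c N x y (2*m+1) j) 0
        = ∑ j ∈ range (N+2), wstar j * av c N x y (2*m+1) j := by
      apply Finset.sum_congr rfl
      intro j _
      simp only [hws]
      split_ifs with h
      · rw [max_eq_left (le_of_lt h), one_mul]
      · rw [max_eq_right (not_lt.mp h), zero_mul]
    have hub := hodd m wstar hwstar
    calc |∑ j ∈ range (N+2), w j * Tv c N (av c N x y (2*m+1)) j|
        ≤ ∑ j ∈ range (N+2), max (av c N x y (2*m+1) j) 0 := hdp
      _ = ∑ j ∈ range (N+2), wstar j * av c N x y (2*m+1) j := hmaxeq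
      _ ≤ |∑ j ∈ range (N+2), wstar j * av c N x y (2*m+1) j| := le_abs_self _
      _ ≤ ((N:ℝ)+1) * lam ^ m := hub
    -- note goal exponent: ((2*m+2-1)/2) = m


lemma EE_sqrt_bound (c : ℝ) (N : ℕ) :
    EE c N ≤ ((c^2/4) * ((|c|/4) * (5/2) + (|c|/4)^2)) / Real.sqrt ((N:ℝ)+1) := by
  have hs0 : 0 < Real.sqrt ((N:ℝ)+1) := Real.sqrt_pos.mpr (by positivity)
  have hsq : Real.sqrt ((N:ℝ)+1) ^ 2 = (N:ℝ)+1 := Real.sq_sqrt (by positivity)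
  have hs1 : 1 ≤ Real.sqrt ((N:ℝ)+1) := by
    nlinarith [hsq, hs0, Nat.cast_nonneg (α := ℝ) N]
  have hsN : Real.sqrt N ≤ Real.sqrt ((N:ℝ)+1) := Real.sqrt_le_sqrt (by linarith)
  set s := Real.sqrt ((N:ℝ)+1) with hsdef
  have hN0 : (0:ℝ) ≤ Real.sqrt N := Real.sqrt_nonneg N
  have hEEexp : EE c N = (|c|/4)*(c^2/4)*(Real.sqrt N/(2*s^2))
      + (|c|/4)*(c^2/4)*(2/s^2) + (c^2/4)*((|c|/4)*((|c|/4)/s^2)) := by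
    unfold EE eps1
    rw [← hsq]
    ring
  have A1 : Real.sqrt N/(2*s^2) ≤ 1/(2*s) := by
    rw [div_le_div_iff₀ (by positivity) (by positivity)]
    nlinarith [hsN, hs0]
  have A2 : 2/s^2 ≤ 2/s := by
    rw [div_le_div_iff₀ (by positivity) (by positivity)]
    nlinarith [hs1, hs0]
  have hss : s ≤ s^2 := by nlinarith [hs1, hs0]
  have A3 : (|c|/4)/s^2 ≤ (|c|/4)/s := by
    rw [div_le_div_iff₀ (by positivity) (by positivity)]
    nlinarith [mul_le_mul_of_nonneg_left hss (show (0:ℝ) ≤ |c|/4 by positivity)]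
  have B1 : (|c|/4)*(c^2/4)*(Real.sqrt N/(2*s^2)) ≤ (|c|/4)*(c^2/4)*(1/(2*s)) :=
    mul_le_mul_of_nonneg_left A1 (by positivity)
  have B2 : (|c|/4)*(c^2/4)*(2/s^2) ≤ (|c|/4)*(c^2/4)*(2/s) :=
    mul_le_mul_of_nonneg_left A2 (by positivity)
  have B3 : (c^2/4)*((|c|/4)*((|c|/4)/s^2)) ≤ (c^2/4)*((|c|/4)*((|c|/4)/s)) := by
    apply mul_le_mul_of_nonneg_left _ (by positivity)
    exact mul_le_mul_of_nonneg_left A3 (by positivity)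
  have hfin : (|c|/4)*(c^2/4)*(1/(2*s)) + (|c|/4)*(c^2/4)*(2/s) + (c^2/4)*((|c|/4)*((|c|/4)/s))
      = ((c^2/4) * ((|c|/4) * (5/2) + (|c|/4)^2)) / s := by
    field_simp
    ring
  rw [hEEexp, ← hfin]
  linarith

lemma finsum_wA (N : ℕ) (v : Fin (N+2) → ℝ) (A : Finset (Fin (N+2))) :
    ∑ i ∈ A, v i = ∑ j ∈ range (N+2),
      (if h : j < N+2 then (if (⟨j,h⟩ : Fin (N+2)) ∈ A then (1:ℝ) else 0) else 0)
        * (if h : j < N+2 then v ⟨j,h⟩ else 0) := by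
  rw [← Fin.sum_univ_eq_sum_range (fun j =>
      (if h : j < N+2 then (if (⟨j,h⟩ : Fin (N+2)) ∈ A then (1:ℝ) else 0) else 0)
        * (if h : j < N+2 then v ⟨j,h⟩ else 0)) (N+2)]
  have h : ∀ i : Fin (N+2),
      (if h : (i:ℕ) < N+2 then (if (⟨(i:ℕ),h⟩ : Fin (N+2)) ∈ A then (1:ℝ) else 0) else 0)
        * (if h : (i:ℕ) < N+2 then v ⟨(i:ℕ),h⟩ else 0)
      = if i ∈ A then v i else 0 := by
    intro i
    rw [dif_pos i.isLt, dif_pos i.isLt]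
    simp only [Fin.eta]
    split_ifs <;> ring
  rw [Finset.sum_congr rfl (fun i _ => h i)]
  rw [Finset.sum_ite_mem, Finset.univ_inter]

set_option maxHeartbeats 2000000 in
/-- Geometric convergence when c > c⋆: ‖K_{c,n}^t(x,·) − π_{c,n}‖_TV ≤ 5nρ_c^t for n ≥ n_c. -/
theorem geometric_convergence (xs c : ℝ)
    (hxs : 0 < xs ∧ xs * Real.exp xs / (1 + Real.exp xs) = 1)
    (hc : c > -1 - xs - Real.exp xs) :
    ∃ ρ : ℝ, ρ < 1 ∧ ∃ nc : ℕ, 0 < nc ∧ ∀ n : ℕ, nc ≤ n → ∀ x : Fin (n + 1), ∀ t : ℕ,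
      tvDist (KerPow c n t x) (piDist c n) ≤ 5 * n * ρ ^ t := by
  obtain ⟨hxs0, hxseq⟩ := hxs
  have hxse : xs * Real.exp xs = 1 + Real.exp xs := by
    rw [div_eq_one_iff_eq (ne_of_gt (one_add_exp_pos xs))] at hxseq
    exact hxseq
  obtain ⟨Λ, hΛ0, hΛ1, hΛpt⟩ := Lambda_exists xs c hxs0 hxse (by linarith)
  obtain ⟨lam, hlamdef⟩ : ∃ l : ℝ, l = (1+Λ)/2 := ⟨_, rfl⟩
  have hlam0 : 0 ≤ lam := by rw [hlamdef]; linarith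
  have hlam1 : lam < 1 := by rw [hlamdef]; linarith
  obtain ⟨ρ, hρdef⟩ : ∃ r : ℝ, r = max (Real.sqrt lam) (1/2) := ⟨_, rfl⟩
  have hρhalf : (1/2:ℝ) ≤ ρ := by rw [hρdef]; exact le_max_right _ _
  have hρ0 : 0 ≤ ρ := by linarith
  have hρ1 : ρ < 1 := by
    rw [hρdef]
    apply max_lt _ (by norm_num)
    calc Real.sqrt lam < Real.sqrt 1 := Real.sqrt_lt_sqrt hlam0 hlam1
      _ = 1 := Real.sqrt_one
  have hρ2 : lam ≤ ρ^2 := by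
    have h1 : Real.sqrt lam ≤ ρ := by rw [hρdef]; exact le_max_left _ _
    calc lam = Real.sqrt lam ^ 2 := (Real.sq_sqrt hlam0).symm
      _ ≤ ρ^2 := pow_le_pow_left₀ (Real.sqrt_nonneg lam) h1 2
  obtain ⟨C0, hC0def⟩ : ∃ C : ℝ, C = (c^2/4) * ((|c|/4) * (5/2) + (|c|/4)^2) := ⟨_, rfl⟩
  have hC0 : 0 ≤ C0 := by rw [hC0def]; positivity
  obtain ⟨R, hRdef⟩ : ∃ r : ℝ, r = (2*C0/(1-Λ))^2 := ⟨_, rfl⟩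
  refine ⟨ρ, hρ1, max 2 (Nat.ceil R + 1), lt_of_lt_of_le two_pos (le_max_left _ _), ?_⟩
  intro n hn x t
  have hn2 : 2 ≤ n := le_trans (le_max_left _ _) hn
  obtain ⟨N, rfl⟩ : ∃ N, n = N+1 := ⟨n-1, by omega⟩
  -- EE bound for n ≥ nc
  have hEE : EE c N ≤ (1-Λ)/2 := by
    have h1 := EE_sqrt_bound c N
    rw [← hC0def] at h1
    have hceil : (Nat.ceil R + 1 : ℕ) ≤ N+1 := le_trans (le_max_right _ _) hn
    have hRn : R < ((N:ℝ)+1) := by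
      have h2 : (R:ℝ) ≤ (Nat.ceil R : ℝ) := Nat.le_ceil R
      have h3 : ((Nat.ceil R + 1 : ℕ) : ℝ) ≤ ((N+1 : ℕ) : ℝ) := Nat.cast_le.mpr hceil
      push_cast at h3
      linarith
    have hs0 : 0 < Real.sqrt ((N:ℝ)+1) := Real.sqrt_pos.mpr (by positivity)
    have hsqrtR : 2*C0/(1-Λ) ≤ Real.sqrt ((N:ℝ)+1) := by
      calc 2*C0/(1-Λ) ≤ |2*C0/(1-Λ)| := le_abs_self _
        _ = Real.sqrt R := by rw [hRdef, Real.sqrt_sq_eq_abs]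
        _ ≤ Real.sqrt ((N:ℝ)+1) := Real.sqrt_le_sqrt (le_of_lt hRn)
    have h2 : C0 / Real.sqrt ((N:ℝ)+1) ≤ (1-Λ)/2 := by
      rw [div_le_iff₀ hs0]
      have h3 := mul_le_mul_of_nonneg_left hsqrtR (show (0:ℝ) ≤ (1-Λ)/2 by linarith)
      have hid : (1-Λ)/2 * (2*C0/(1-Λ)) = C0 := by
        have hpos : (0:ℝ) < 1-Λ := by linarith
        field_simp
      linarith [h3, hid]
    linarith
  have hlamle : Λ + EE c N ≤ lam := by rw [hlamdef]; linarith
  -- pair bound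
  have hpair : ∀ (y : Fin (N+2)) (A : Finset (Fin (N+2))),
      |∑ i ∈ A, KerPow c (N+1) t x i - ∑ i ∈ A, KerPow c (N+1) t y i|
        ≤ (if t = 0 then 1 else ((N:ℝ)+1) * lam ^ ((t-1)/2)) := by
    intro y A
    have hrw : ∑ i ∈ A, KerPow c (N+1) t x i - ∑ i ∈ A, KerPow c (N+1) t y i
        = ∑ j ∈ range (N+2),
          (if h : j < N+2 then (if (⟨j,h⟩ : Fin (N+2)) ∈ A then (1:ℝ) else 0) else 0)
            * av c N x y t j := by
      rw [finsum_wA N (fun i => KerPow c (N+1) t x i) A,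
        finsum_wA N (fun i => KerPow c (N+1) t y i) A, ← Finset.sum_sub_distrib]
      apply Finset.sum_congr rfl
      intro j _
      unfold av
      by_cases hj : j < N+2
      · rw [dif_pos hj, dif_pos hj, dif_pos hj, dif_pos hj]
        ring
      · rw [dif_neg hj, dif_neg hj, dif_neg hj, dif_neg hj]
        ring
    rcases Nat.eq_zero_or_pos t with ht0 | ht1
    · rw [ht0, if_pos rfl]
      have hbd : ∀ z : Fin (N+2), 0 ≤ ∑ i ∈ A, KerPow c (N+1) 0 z i
          ∧ ∑ i ∈ A, KerPow c (N+1) 0 z i ≤ 1 := by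
        intro z
        constructor
        · exact Finset.sum_nonneg (fun i _ => kerPow_nonneg c N 0 z i)
        · rw [← kerPow_rowsum c N 0 z]
          apply Finset.sum_le_sum_of_subset_of_nonneg (Finset.subset_univ A)
          intro i _ _
          exact kerPow_nonneg c N 0 z i
      rw [abs_le]
      constructor <;> [linarith [(hbd x).1, (hbd x).2, (hbd y).1, (hbd y).2];
        linarith [(hbd x).1, (hbd x).2, (hbd y).1, (hbd y).2]]
    · rw [if_neg (by omega), hrw]
      apply pair_w_bound c N Λ lam hΛ0 hΛpt hlamle hlam0 x y t ht1
      intro j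
      by_cases hj : j < N+2
      · rw [dif_pos hj]
        split_ifs <;> simp
      · rw [dif_neg hj]
        left; rfl
  -- bound the bound by 5 n ρ^t
  have hBρ : (if t = 0 then (1:ℝ) else ((N:ℝ)+1) * lam ^ ((t-1)/2))
      ≤ 5 * ((N:ℝ)+1) * ρ^t := by
    rcases Nat.eq_zero_or_pos t with ht0 | ht1
    · rw [ht0, if_pos rfl, pow_zero]
      have : (0:ℝ) ≤ (N:ℝ) := Nat.cast_nonneg N
      nlinarith
    · rw [if_neg (by omega)]
      obtain ⟨m, hmdef⟩ : ∃ m, m = (t-1)/2 := ⟨_, rfl⟩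
      rw [← hmdef]
      have hlm : lam ^ m ≤ (ρ^2)^m := pow_le_pow_left₀ hlam0 hρ2 m
      have hNnn : (0:ℝ) ≤ (N:ℝ)+1 := by positivity
      have hpow : (0:ℝ) ≤ (ρ^2)^m := by positivity
      rcases (show t = 2*m+1 ∨ t = 2*m+2 from by omega) with ht2 | ht2
      · have hρt : ρ^t = (ρ^2)^m * ρ := by
          rw [ht2, pow_succ, pow_mul]
        have h5 : lam ^ m ≤ 5 * ρ^t := by
          rw [hρt]
          nlinarith [hlm, hpow, hρhalf]
        calc ((N:ℝ)+1) * lam ^ m ≤ ((N:ℝ)+1) * (5 * ρ^t) :=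
              mul_le_mul_of_nonneg_left h5 hNnn
          _ = 5 * ((N:ℝ)+1) * ρ^t := by ring
      · have hρt : ρ^t = (ρ^2)^m * ρ^2 := by
          rw [ht2, show 2*m+2 = 2*(m+1) from by ring, pow_mul, pow_succ]
        have h5 : lam ^ m ≤ 5 * ρ^t := by
          rw [hρt]
          nlinarith [hlm, hpow, hρhalf]
        calc ((N:ℝ)+1) * lam ^ m ≤ ((N:ℝ)+1) * (5 * ρ^t) :=
              mul_le_mul_of_nonneg_left h5 hNnn
          _ = 5 * ((N:ℝ)+1) * ρ^t := by ring
  -- stationarity & final sup bound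
  apply ciSup_le
  intro A
  have hstat : ∑ i ∈ A, piDist c (N+1) i
      = ∑ y : Fin (N+2), piDist c (N+1) y * ∑ i ∈ A, KerPow c (N+1) t y i := by
    calc ∑ i ∈ A, piDist c (N+1) i
        = ∑ i ∈ A, ∑ y : Fin (N+2), piDist c (N+1) y * KerPow c (N+1) t y i := by
          apply Finset.sum_congr rfl
          intro i _
          rw [pi_kerPow c (N+1) (Nat.succ_pos N) t i]
      _ = ∑ y : Fin (N+2), ∑ i ∈ A, piDist c (N+1) y * KerPow c (N+1) t y i :=
          Finset.sum_comm
      _ = ∑ y : Fin (N+2), piDist c (N+1) y * ∑ i ∈ A, KerPow c (N+1) t y i := by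
          apply Finset.sum_congr rfl
          intro y _
          rw [Finset.mul_sum]
  have hxpart : ∑ i ∈ A, KerPow c (N+1) t x i
      = ∑ y : Fin (N+2), piDist c (N+1) y * ∑ i ∈ A, KerPow c (N+1) t x i := by
    rw [← Finset.sum_mul, piDist_sum c (N+1), one_mul]
  calc |∑ i ∈ A, KerPow c (N+1) t x i - ∑ i ∈ A, piDist c (N+1) i|
      = |∑ y : Fin (N+2), piDist c (N+1) y
          * (∑ i ∈ A, KerPow c (N+1) t x i - ∑ i ∈ A, KerPow c (N+1) t y i)| := by
        rw [hstat]
        congr 1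
        rw [Finset.sum_congr rfl (fun y _ => mul_sub (piDist c (N+1) y)
          (∑ i ∈ A, KerPow c (N+1) t x i) (∑ i ∈ A, KerPow c (N+1) t y i)),
          Finset.sum_sub_distrib, ← Finset.sum_mul, piDist_sum c (N+1), one_mul]
    _ ≤ ∑ y : Fin (N+2), piDist c (N+1) y
          * |∑ i ∈ A, KerPow c (N+1) t x i - ∑ i ∈ A, KerPow c (N+1) t y i| := by
        calc _ ≤ ∑ y : Fin (N+2), |piDist c (N+1) y
            * (∑ i ∈ A, KerPow c (N+1) t x i - ∑ i ∈ A, KerPow c (N+1) t y i)| :=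
              Finset.abs_sum_le_sum_abs _ _
          _ = _ := by
            apply Finset.sum_congr rfl
            intro y _
            rw [abs_mul, abs_of_nonneg (piDist_nonneg c (N+1) y)]
    _ ≤ ∑ y : Fin (N+2), piDist c (N+1) y * (if t = 0 then 1 else ((N:ℝ)+1) * lam ^ ((t-1)/2)) := by
        apply Finset.sum_le_sum
        intro y _
        exact mul_le_mul_of_nonneg_left (hpair y A) (piDist_nonneg c (N+1) y)
    _ = (if t = 0 then 1 else ((N:ℝ)+1) * lam ^ ((t-1)/2)) := by
        rw [← Finset.sum_mul, piDist_sum c (N+1), one_mul]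
    _ ≤ 5 * ((N:ℝ)+1) * ρ^t := hBρ
    _ = 5 * ((N+1 : ℕ):ℝ) * ρ^t := by push_cast; ring
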